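/- arXiv:math/0608204 — 4 statements merged into one kernel-verified Lean document; each statement's English description precedes it below -/
import Mathlib

section
/- For any continuous function g : S² → ℝ satisfying g(-x) = -g(x) for all x ∈ S², there exists a nonempty compact connected subset X of g⁻¹({0}) that is invariant under the antipodal map, i.e., -X = X. -/
open Complex Set Real

lemma const_of_exp_eq_one {D : ℝ → ℂ} {s : Set ℝ} (hD : ContinuousOn D s)
    (hs : IsPreconnected s) (h1 : ∀ t ∈ s, Complex.exp (D t) = 1) :
    ∀ a ∈ s, ∀ b ∈ s, D a = D b := by
  have key : ∀ t ∈ s, ∃ n : ℤ, D t = n * (2 * Real.pi * I) := by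
    intro t ht; exact Complex.exp_eq_one_iff.mp (h1 t ht)
  have hpi : (0:ℝ) < 2 * Real.pi := by positivity
  set E : ℝ → ℝ := fun t => (D t).im / (2 * Real.pi) with hE
  have hEint : ∀ t ∈ s, ∃ n : ℤ, E t = n := by
    intro t ht
    obtain ⟨n, hn⟩ := key t ht
    refine ⟨n, ?_⟩
    simp only [hE, hn]
    simp [Complex.mul_im, Complex.mul_re]
  have hEcont : ContinuousOn E s := (Complex.continuous_im.comp_continuousOn hD).div_const _
  have hEconn : IsPreconnected (E '' s) := hs.image E hEcont
  have main : ∀ a ∈ s, ∀ b ∈ s, ∀ na nb : ℤ, E a = na → E b = nb → na < nb → False := by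
    intro a ha b hb na nb hna hnb hlt
    have hmid : (na : ℝ) + 1/2 ∈ E '' s := by
      refine hEconn.Icc_subset (mem_image_of_mem E ha) (mem_image_of_mem E hb) ?_
      have h1' : (na:ℝ) + 1 ≤ nb := by exact_mod_cast hlt
      refine ⟨?_, ?_⟩
      · rw [hna]; linarith
      · rw [hnb]; linarith
    obtain ⟨t, hts, hte⟩ := hmid
    obtain ⟨n, hn⟩ := hEint t hts
    rw [hn] at hte
    have : (2*n : ℤ) = 2*na + 1 := by exact_mod_cast (by linarith : (2*n : ℝ) = 2*na + 1)
    omega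
  intro a ha b hb
  obtain ⟨na, hna⟩ := hEint a ha
  obtain ⟨nb, hnb⟩ := hEint b hb
  have hnn : na = nb := by
    rcases lt_trichotomy na nb with h | h | h
    · exact absurd (main a ha b hb na nb hna hnb h) not_false
    · exact h
    · exact absurd (main b hb a ha nb na hnb hna h) not_false
  obtain ⟨na', hna'⟩ := key a ha
  obtain ⟨nb', hnb'⟩ := key b hb
  -- identify na' with na etc.
  have ima : (D a).im = na * (2 * Real.pi) := by
    have h' := hna; rw [hE] at h'; simp only at h'; rw [div_eq_iff hpi.ne'] at h'; linarith
  have imb : (D b).im = nb * (2 * Real.pi) := by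
    have h' := hnb; rw [hE] at h'; simp only at h'; rw [div_eq_iff hpi.ne'] at h'; linarith
  have e1 : (D a).im = (D b).im := by rw [ima, imb, hnn]
  have ra : (D a).re = 0 := by rw [hna']; simp [Complex.mul_re]
  have rb : (D b).re = 0 := by rw [hnb']; simp [Complex.mul_re]
  exact Complex.ext (by rw [ra, rb]) e1


noncomputable def clamp01 (t : ℝ) : ℝ := max 0 (min t 1)

lemma clamp01_mem (t : ℝ) : clamp01 t ∈ Icc (0:ℝ) 1 :=
  ⟨le_max_left _ _, max_le zero_le_one (min_le_right _ _)⟩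

lemma clamp01_lipschitz (s t : ℝ) : |clamp01 s - clamp01 t| ≤ |s - t| := by
  unfold clamp01
  calc |max 0 (min s 1) - max 0 (min t 1)| ≤ max |(0:ℝ) - 0| |min s 1 - min t 1| :=
        abs_max_sub_max_le_max _ _ _ _
    _ ≤ max |(0:ℝ) - 0| (max |s - t| |(1:ℝ) - 1|) := by
        exact max_le_max le_rfl (abs_min_sub_min_le_max _ _ _ _)
    _ ≤ |s - t| := by simp

lemma clamp01_of_nonpos {t : ℝ} (h : t ≤ 0) : clamp01 t = 0 := by
  unfold clamp01; rw [min_eq_left (h.trans zero_le_one), max_eq_left h]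

lemma clamp01_of_one_le {t : ℝ} (h : 1 ≤ t) : clamp01 t = 1 := by
  unfold clamp01; rw [min_eq_right h, max_eq_right zero_le_one]

lemma clamp01_continuous : Continuous clamp01 := by
  unfold clamp01; fun_prop

lemma exists_lift (γ : ℝ → ℂ) (hc : Continuous γ) (hnz : ∀ t, γ t ≠ 0)
    (hclamp : ∀ t, γ t = γ (clamp01 t)) :
    ∃ F : ℝ → ℂ, Continuous F ∧ ∀ t, Complex.exp (F t) = γ t := by
  obtain ⟨t₀, ht₀, hmin⟩ := (isCompact_Icc : IsCompact (Icc (0:ℝ) 1)).exists_isMinOn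
    (f := fun t => ‖γ t‖) ⟨0, by norm_num⟩ (hc.norm.continuousOn)
  set m : ℝ := ‖γ t₀‖ with hm
  have hm0 : 0 < m := norm_pos_iff.mpr (hnz t₀)
  have hmle : ∀ t, m ≤ ‖γ t‖ := by
    intro t; rw [hclamp t]; exact hmin (clamp01_mem t)
  have huc := isCompact_Icc.uniformContinuousOn_of_continuous
    (s := Icc (0:ℝ) 1) hc.continuousOn
  rw [Metric.uniformContinuousOn_iff] at huc
  obtain ⟨δ, hδ0, hδ⟩ := huc m hm0
  have hglob : ∀ s t : ℝ, dist s t < δ → ‖γ s - γ t‖ < m := by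
    intro s t hst
    rw [hclamp s, hclamp t]
    have : dist (clamp01 s) (clamp01 t) < δ := by
      rw [Real.dist_eq] at *
      exact lt_of_le_of_lt (clamp01_lipschitz s t) hst
    simpa [dist_eq_norm] using hδ _ (clamp01_mem s) _ (clamp01_mem t) this
  have hslit : ∀ a t : ℝ, |t - a| ≤ δ/2 → γ t / γ a ∈ slitPlane := by
    intro a t hta
    have h1 : ‖γ t / γ a - 1‖ < 1 := by
      rw [div_sub_one (hnz a), norm_div]
      rw [div_lt_one (norm_pos_iff.mpr (hnz a))]
      exact lt_of_lt_of_le (hglob t a (by rw [Real.dist_eq]; linarith)) (hmle a)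
    have := Complex.mem_slitPlane_of_norm_lt_one h1
    simpa using this
  have main : ∀ n : ℕ, ∃ F : ℝ → ℂ, Continuous F ∧
      ∀ t ≤ (n:ℝ)*(δ/2), Complex.exp (F t) = γ t := by
    intro n
    induction n with
    | zero =>
      refine ⟨fun _ => Complex.log (γ 0), continuous_const, ?_⟩
      intro t ht
      simp only [Nat.cast_zero, zero_mul] at ht
      rw [Complex.exp_log (hnz 0), hclamp t, clamp01_of_nonpos ht]
    | succ n ih =>
      obtain ⟨F, hFc, hF⟩ := ih
      set a : ℝ := (n:ℝ)*(δ/2) with ha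
      set u : ℝ → ℝ := fun t => max a (min t (a + δ/2)) with hu
      have hul : ∀ t, a ≤ u t := fun t => le_max_left _ _
      have huu : ∀ t, u t ≤ a + δ/2 := fun t => max_le (by linarith) (min_le_right _ _)
      have hu_mem : ∀ t, |u t - a| ≤ δ/2 := by
        intro t; rw [abs_le]; constructor
        · have := hul t; linarith
        · have := huu t; linarith
      have huc' : Continuous u := by fun_prop
      have hratio : ∀ t, γ (u t) / γ a ∈ slitPlane := fun t => hslit a (u t) (hu_mem t)
      have hua : u a = a := by
        simp only [hu]
        rw [min_eq_left (by linarith), max_self]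
      refine ⟨fun t => if t ≤ a then F t else F a + Complex.log (γ (u t) / γ a), ?_, ?_⟩
      · apply Continuous.if_le hFc ?_ continuous_id continuous_const
        · intro t ht
          have ht' : t = a := ht
          subst ht'
          rw [hua, div_self (hnz a), Complex.log_one, add_zero]
        · rw [continuous_iff_continuousAt]
          intro t
          refine ContinuousAt.add continuousAt_const ?_
          have hca : ContinuousAt (fun x => γ (u x) / γ a) t :=
            ContinuousAt.div ((hc.comp huc').continuousAt) continuousAt_const (hnz a)
          exact ContinuousAt.comp (f := fun x => γ (u x) / γ a) (g := Complex.log)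
            (continuousAt_clog (hratio t)) hca
      · intro t ht
        by_cases h : t ≤ a
        · show Complex.exp (if t ≤ a then F t else _) = γ t
          rw [if_pos h]; exact hF t h
        · show Complex.exp (if t ≤ a then F t else F a + Complex.log (γ (u t) / γ a)) = γ t
          rw [if_neg h]
          push_neg at h
          have htu : u t = t := by
            simp only [hu]
            rw [min_eq_left, max_eq_right h.le]
            push_cast at ht; linarith
          rw [Complex.exp_add, Complex.exp_log (div_ne_zero (hnz (u t)) (hnz a)), hF a le_rfl,
            htu, mul_div_cancel₀ _ (hnz a)]
  obtain ⟨n, hn⟩ := exists_nat_ge (2/δ)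
  obtain ⟨F, hFc, hF⟩ := main n
  have hb1 : (1:ℝ) ≤ (n:ℝ)*(δ/2) := by
    calc (1:ℝ) = (2/δ)*(δ/2) := by field_simp
      _ ≤ (n:ℝ)*(δ/2) := mul_le_mul_of_nonneg_right hn (by positivity)
  set b : ℝ := (n:ℝ)*(δ/2) with hb
  refine ⟨fun t => F (min t b), hFc.comp (continuous_id.min continuous_const), ?_⟩
  intro t
  by_cases h : t ≤ b
  · show Complex.exp (F (min t b)) = γ t
    rw [min_eq_left h]; exact hF t h
  · push_neg at h
    show Complex.exp (F (min t b)) = γ t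
    rw [min_eq_right h.le, hF b le_rfl, hclamp b, hclamp t,
      clamp01_of_one_le hb1, clamp01_of_one_le (by linarith)]


lemma clamp01_one : clamp01 1 = 1 := by unfold clamp01; norm_num
lemma clamp01_zero : clamp01 0 = 0 := by unfold clamp01; norm_num
lemma clamp01_eq_self {t : ℝ} (h : t ∈ Set.Icc (0:ℝ) 1) : clamp01 t = t := by
  unfold clamp01; rw [min_eq_left h.2, max_eq_right h.1]

noncomputable def sv (r t : ℝ) : EuclideanSpace ℝ (Fin 3) :=
  (clamp01 r * Real.cos (2*π*t)) • EuclideanSpace.single (0 : Fin 3) (1:ℝ)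
  + (clamp01 r * Real.sin (2*π*t)) • EuclideanSpace.single (1 : Fin 3) (1:ℝ)
  + Real.sqrt (1 - clamp01 r ^ 2) • EuclideanSpace.single (2 : Fin 3) (1:ℝ)

lemma sv_apply (r t : ℝ) :
    sv r t 0 = clamp01 r * Real.cos (2*π*t) ∧
    sv r t 1 = clamp01 r * Real.sin (2*π*t) ∧
    sv r t 2 = Real.sqrt (1 - clamp01 r ^ 2) := by
  refine ⟨?_, ?_, ?_⟩ <;>
    simp [sv, EuclideanSpace.single_apply, PiLp.add_apply, PiLp.smul_apply]

lemma sv_mem (r t : ℝ) : sv r t ∈ Metric.sphere (0 : EuclideanSpace ℝ (Fin 3)) 1 := by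
  rw [mem_sphere_zero_iff_norm, EuclideanSpace.norm_eq]
  obtain ⟨h0, h1, h2⟩ := sv_apply r t
  rw [Fin.sum_univ_three, h0, h1, h2]
  obtain ⟨hc0, hc1⟩ := clamp01_mem r
  have hsq : Real.sqrt (1 - clamp01 r ^ 2) ^ 2 = 1 - clamp01 r ^ 2 :=
    Real.sq_sqrt (by nlinarith)
  have : ‖clamp01 r * Real.cos (2*π*t)‖^2 + ‖clamp01 r * Real.sin (2*π*t)‖^2
      + ‖Real.sqrt (1 - clamp01 r ^ 2)‖^2 = 1 := by
    simp only [Real.norm_eq_abs]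
    have h3 := Real.sin_sq_add_cos_sq (2*π*t)
    have e1 := _root_.sq_abs (clamp01 r * Real.cos (2*π*t))
    have e2 := _root_.sq_abs (clamp01 r * Real.sin (2*π*t))
    have e3 := _root_.sq_abs (Real.sqrt (1 - clamp01 r ^ 2))
    nlinarith
  rw [this, Real.sqrt_one]

abbrev Sph := Metric.sphere (0 : EuclideanSpace ℝ (Fin 3)) 1

noncomputable def Q (r t : ℝ) : Sph := ⟨sv r t, sv_mem r t⟩

lemma Q_continuous : Continuous (fun p : ℝ × ℝ => Q p.1 p.2) := by
  apply Continuous.subtype_mk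
  unfold sv
  have hcl : Continuous fun p : ℝ × ℝ => clamp01 p.1 := clamp01_continuous.comp continuous_fst
  fun_prop (disch := simp)

lemma sv_ext {r t r' t' : ℝ} (h0 : sv r t 0 = sv r' t' 0) (h1 : sv r t 1 = sv r' t' 1)
    (h2 : sv r t 2 = sv r' t' 2) : sv r t = sv r' t' := by
  ext j
  fin_cases j <;> assumption

lemma Q_period (r : ℝ) : Q r 1 = Q r 0 := by
  apply Subtype.ext
  show sv r 1 = sv r 0
  apply sv_ext <;>
  · obtain ⟨a0, a1, a2⟩ := sv_apply r 1
    obtain ⟨b0, b1, b2⟩ := sv_apply r 0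
    first
    | (rw [a0, b0]; norm_num [Real.cos_two_pi])
    | (rw [a1, b1]; norm_num [Real.sin_two_pi])
    | rw [a2, b2]

lemma Q_antipode (t : ℝ) : Q 1 (t + 1/2) = - Q 1 t := by
  apply Subtype.ext
  rw [coe_neg_sphere]
  show sv 1 (t + 1/2) = -(sv 1 t)
  have key : ∀ j, sv 1 (t + 1/2) j = -(sv 1 t j) := by
    intro j
    obtain ⟨a0, a1, a2⟩ := sv_apply 1 (t + 1/2)
    obtain ⟨b0, b1, b2⟩ := sv_apply 1 t
    have harg : 2*π*(t + 1/2) = 2*π*t + π := by ring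
    fin_cases j
    · show sv 1 (t + 1/2) 0 = -(sv 1 t 0)
      rw [a0, b0, harg, Real.cos_add_pi]; ring
    · show sv 1 (t + 1/2) 1 = -(sv 1 t 1)
      rw [a1, b1, harg, Real.sin_add_pi]; ring
    · show sv 1 (t + 1/2) 2 = -(sv 1 t 2)
      rw [a2, b2, clamp01_one]; norm_num
  ext j
  rw [show (-(sv 1 t)) j = -(sv 1 t j) from rfl]
  exact key j

lemma Q_north (t : ℝ) : Q 0 t = Q 0 0 := by
  apply Subtype.ext
  show sv 0 t = sv 0 0
  apply sv_ext <;>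
  · obtain ⟨a0, a1, a2⟩ := sv_apply 0 t
    obtain ⟨b0, b1, b2⟩ := sv_apply 0 0
    first
    | (rw [a0, b0, clamp01_zero]; ring)
    | (rw [a1, b1, clamp01_zero]; ring)
    | rw [a2, b2]

set_option maxHeartbeats 1000000 in
theorem no_odd_nonvanishing (h : Sph → ℂ) (hc : Continuous h) (hnz : ∀ x, h x ≠ 0)
    (hodd : ∀ x : Sph, h (-x) = - h x) : False := by
  classical
  set γ : ℝ → ℝ → ℂ := fun r t => h (Q r (clamp01 t)) with hγ
  have hγc : Continuous (fun p : ℝ × ℝ => γ p.1 p.2) :=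
    hc.comp (Q_continuous.comp (continuous_fst.prodMk (clamp01_continuous.comp continuous_snd)))
  have hγc1 : ∀ r, Continuous (γ r) := by
    intro r
    have : Continuous (fun t : ℝ => (r, t)) := (continuous_const.prodMk continuous_id)
    exact hγc.comp this
  have hγnz : ∀ r t, γ r t ≠ 0 := fun r t => hnz _
  have hγclamp : ∀ r t, γ r t = γ r (clamp01 t) := by
    intro r t
    simp only [hγ, clamp01_eq_self (clamp01_mem t)]
  have hγper : ∀ r, γ r 1 = γ r 0 := by
    intro r
    simp only [hγ, clamp01_one, clamp01_zero, Q_period]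
  have wex : ∀ r : ℝ, ∃ w : ℂ, ∃ F : ℝ → ℂ, Continuous F ∧
      (∀ t, Complex.exp (F t) = γ r t) ∧ F 1 - F 0 = w := by
    intro r
    obtain ⟨F, hF1, hF2⟩ := exists_lift (γ r) (hγc1 r) (hγnz r) (fun t => hγclamp r t)
    exact ⟨F 1 - F 0, F, hF1, hF2, rfl⟩
  set w : ℝ → ℂ := fun r => Classical.choose (wex r) with hw
  have wspec : ∀ r, ∃ F : ℝ → ℂ, Continuous F ∧
      (∀ t, Complex.exp (F t) = γ r t) ∧ F 1 - F 0 = w r :=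
    fun r => Classical.choose_spec (wex r)
  have wuniq : ∀ r (F : ℝ → ℂ), Continuous F → (∀ t, Complex.exp (F t) = γ r t) →
      F 1 - F 0 = w r := by
    intro r F hFc hF
    obtain ⟨G, hGc, hG, hGw⟩ := wspec r
    have hD : ∀ t ∈ (univ : Set ℝ), Complex.exp ((fun t => F t - G t) t) = 1 := by
      intro t _
      rw [Complex.exp_sub, hF, hG, div_self (hγnz r t)]
    have h1 := const_of_exp_eq_one (D := fun t => F t - G t)
      ((hFc.sub hGc).continuousOn) isPreconnected_univ hD 1 (mem_univ _) 0 (mem_univ _)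
    rw [← hGw]
    linear_combination h1
  have wloc : ∀ r₀ : ℝ, ∃ η > 0, ∀ r, |r - r₀| < η → w r = w r₀ := by
    intro r₀
    obtain ⟨t₀, ht₀, hmin⟩ := (isCompact_Icc : IsCompact (Icc (0:ℝ) 1)).exists_isMinOn
      (f := fun t => ‖γ r₀ t‖) ⟨0, by norm_num⟩ ((hγc1 r₀).norm.continuousOn)
    set m : ℝ := ‖γ r₀ t₀‖ with hm
    have hm0 : 0 < m := norm_pos_iff.mpr (hγnz r₀ t₀)
    have hmle : ∀ t, m ≤ ‖γ r₀ t‖ := by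
      intro t; rw [hγclamp r₀ t]; exact hmin (clamp01_mem t)
    have hK : IsCompact (Icc (r₀ - 1) (r₀ + 1) ×ˢ Icc (0:ℝ) 1) :=
      isCompact_Icc.prod isCompact_Icc
    have huc := hK.uniformContinuousOn_of_continuous hγc.continuousOn
    rw [Metric.uniformContinuousOn_iff] at huc
    obtain ⟨δ, hδ0, hδ⟩ := huc m hm0
    refine ⟨min δ 1, by positivity, ?_⟩
    intro r hr
    have hclose : ∀ t, ‖γ r t - γ r₀ t‖ < m := by
      intro t
      rw [hγclamp r t, hγclamp r₀ t]
      have hrmem : (r, clamp01 t) ∈ Icc (r₀ - 1) (r₀ + 1) ×ˢ Icc (0:ℝ) 1 := by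
        refine ⟨?_, clamp01_mem t⟩
        rw [abs_lt] at hr
        have h1 := lt_of_lt_of_le hr.2 (min_le_right δ 1)
        have h2 := lt_of_le_of_lt (neg_le_neg (min_le_right δ 1)) hr.1
        constructor <;> simp only [mem_Icc] <;> linarith
      have hr0mem : (r₀, clamp01 t) ∈ Icc (r₀ - 1) (r₀ + 1) ×ˢ Icc (0:ℝ) 1 := by
        refine ⟨?_, clamp01_mem t⟩
        constructor <;> linarith
      have hdist : dist ((r, clamp01 t) : ℝ × ℝ) ((r₀, clamp01 t)) < δ := by
        rw [Prod.dist_eq]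
        simp only [dist_self]
        rw [max_eq_left dist_nonneg, Real.dist_eq]
        exact lt_of_lt_of_le hr (min_le_left _ _)
      have := hδ _ hrmem _ hr0mem hdist
      simpa [dist_eq_norm] using this
    obtain ⟨F₀, hF₀c, hF₀, hF₀w⟩ := wspec r₀
    set q : ℝ → ℂ := fun t => γ r t / γ r₀ t with hq
    have hqs : ∀ t, q t ∈ Complex.slitPlane := by
      intro t
      have h1 : ‖q t - 1‖ < 1 := by
        rw [hq]
        simp only
        rw [div_sub_one (hγnz r₀ t), norm_div, div_lt_one (norm_pos_iff.mpr (hγnz r₀ t))]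
        exact lt_of_lt_of_le (hclose t) (hmle t)
      have := Complex.mem_slitPlane_of_norm_lt_one h1
      simpa using this
    have hqc : Continuous q := (hγc1 r).div (hγc1 r₀) (hγnz r₀)
    set F : ℝ → ℂ := fun t => F₀ t + Complex.log (q t) with hF
    have hFc : Continuous F := by
      rw [continuous_iff_continuousAt]
      intro t
      refine ContinuousAt.add hF₀c.continuousAt ?_
      exact ContinuousAt.comp (f := q) (g := Complex.log) (continuousAt_clog (hqs t))
        hqc.continuousAt
    have hFlift : ∀ t, Complex.exp (F t) = γ r t := by
      intro t
      rw [hF]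
      simp only
      rw [Complex.exp_add, hF₀, Complex.exp_log (div_ne_zero (hγnz r t) (hγnz r₀ t))]
      rw [mul_div_cancel₀ _ (hγnz r₀ t)]
    have := wuniq r F hFc hFlift
    rw [← this, hF]
    simp only
    have hq10 : q 1 = q 0 := by rw [hq]; simp only; rw [hγper r, hγper r₀]
    rw [hq10, ← hF₀w]
    ring
  -- w is constant
  have wconst : w 1 = w 0 := by
    set A : Set ℝ := {r | w r = w 0} with hA
    have hAopen : IsOpen A := by
      rw [Metric.isOpen_iff]
      intro r₀ hr₀
      obtain ⟨η, hη0, hη⟩ := wloc r₀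
      refine ⟨η, hη0, ?_⟩
      intro r hrr
      rw [Metric.mem_ball, Real.dist_eq] at hrr
      show w r = w 0
      rw [hη r hrr, hr₀]
    have hAcopen : IsOpen Aᶜ := by
      rw [Metric.isOpen_iff]
      intro r₀ hr₀
      obtain ⟨η, hη0, hη⟩ := wloc r₀
      refine ⟨η, hη0, ?_⟩
      intro r hrr
      rw [Metric.mem_ball, Real.dist_eq] at hrr
      intro hcon
      apply hr₀
      show w r₀ = w 0
      rw [← hη r hrr]; exact hcon
    have : A = univ := IsClopen.eq_univ ⟨by rw [← isOpen_compl_iff]; exact hAcopen, hAopen⟩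
      ⟨0, rfl⟩
    have h1 : (1:ℝ) ∈ A := this ▸ mem_univ _
    exact h1
  have w0 : w 0 = 0 := by
    have hconst : ∀ t, γ 0 t = γ 0 0 := by
      intro t
      simp only [hγ, clamp01_zero]
      rw [Q_north (clamp01 t)]
    have := wuniq 0 (fun _ => Complex.log (γ 0 0)) continuous_const ?_
    · rw [← this]; ring
    · intro t
      rw [Complex.exp_log (hγnz 0 0), hconst t]
  have w1 : w 1 = 0 := by rw [wconst, w0]
  -- the odd loop has nonzero winding: contradiction
  obtain ⟨F, hFc, hF, hFw⟩ := wspec 1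
  have hγodd : ∀ t ∈ Icc (0:ℝ) (1/2), γ 1 (t + 1/2) = - γ 1 t := by
    intro t ht
    have ht1 : clamp01 t = t := clamp01_eq_self ⟨ht.1, by linarith [ht.2]⟩
    have ht2 : clamp01 (t + 1/2) = t + 1/2 := clamp01_eq_self ⟨by linarith [ht.1], by linarith [ht.2]⟩
    simp only [hγ, ht1, ht2]
    rw [Q_antipode t, hodd]
  set D : ℝ → ℂ := fun t => F (t + 1/2) - F t - (Real.pi : ℂ) * Complex.I with hD
  have hDc : Continuous D := ((hFc.comp (continuous_id.add continuous_const)).sub hFc).sub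
    continuous_const
  have hD1 : ∀ t ∈ Icc (0:ℝ) (1/2), Complex.exp (D t) = 1 := by
    intro t ht
    rw [hD]
    simp only
    rw [Complex.exp_sub, Complex.exp_sub, hF, hF, hγodd t ht, Complex.exp_pi_mul_I]
    have := hγnz 1 t
    field_simp
  have hDconst := const_of_exp_eq_one hDc.continuousOn isPreconnected_Icc hD1
    0 (by constructor <;> norm_num) (1/2) (by constructor <;> norm_num)
  have hexp : Complex.exp (D 0) = 1 := hD1 0 (by constructor <;> norm_num)
  have hsum : F 1 - F 0 = D (1/2) + D 0 + 2 * (Real.pi : ℂ) * Complex.I := by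
    rw [hD]
    simp only
    norm_num
    ring
  rw [hFw, w1] at hsum
  have hκ : D 0 = -(Real.pi : ℂ) * Complex.I := by
    rw [← hDconst] at hsum
    linear_combination -hsum / 2
  rw [hκ] at hexp
  rw [show (-(Real.pi : ℂ) * Complex.I) = -((Real.pi : ℂ) * Complex.I) by ring,
    Complex.exp_neg, Complex.exp_pi_mul_I] at hexp
  norm_num at hexp

/-- Combine clopen sets avoiding the involution into one. -/
def combineSets {Y : Type*} (σ : Y → Y) : List (Set Y) → Set Y
  | [] => ∅
  | E :: l => E ∪ (combineSets σ l \ (E ∪ σ ⁻¹' E))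

lemma combineSets_spec {Y : Type*} [TopologicalSpace Y] {σ : Y → Y} (hσc : Continuous σ)
    (hσσ : ∀ y, σ (σ y) = y) (l : List (Set Y))
    (hl : ∀ E ∈ l, IsClopen E ∧ ∀ y ∈ E, σ y ∉ E) :
    IsClopen (combineSets σ l) ∧ (∀ y ∈ combineSets σ l, σ y ∉ combineSets σ l) ∧
      (∀ E ∈ l, ∀ y ∈ E, y ∈ combineSets σ l ∨ σ y ∈ combineSets σ l) := by
  induction l with
  | nil => exact ⟨isClopen_empty, by simp [combineSets], by simp⟩
  | cons E l ih =>
    obtain ⟨hW, hWdisj, hWcov⟩ := ih (fun F hF => hl F (List.mem_cons_of_mem E hF))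
    obtain ⟨hE, hEdisj⟩ := hl E List.mem_cons_self
    set W := combineSets σ l with hWdef
    have hcomb : combineSets σ (E :: l) = E ∪ (W \ (E ∪ σ ⁻¹' E)) := rfl
    rw [hcomb]
    refine ⟨?_, ?_, ?_⟩
    · exact hE.union (hW.diff (hE.union (hE.preimage hσc)))
    · rintro y (hy | ⟨hyW, hyn⟩) hσy
      · rcases hσy with hσyE | ⟨hσyW, hσyn⟩
        · exact hEdisj y hy hσyE
        · exact hσyn (Or.inr (by rw [Set.mem_preimage, hσσ]; exact hy))
      · rcases hσy with hσyE | ⟨hσyW, hσyn⟩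
        · exact hyn (Or.inr hσyE)
        · exact hWdisj y hyW hσyW
    · intro F hF y hyF
      rcases List.mem_cons.mp hF with rfl | hFl
      · exact Or.inl (Or.inl hyF)
      · rcases hWcov F hFl y hyF with hyW | hσyW
        · by_cases hyE : y ∈ E
          · exact Or.inl (Or.inl hyE)
          · by_cases hyσE : y ∈ σ ⁻¹' E
            · exact Or.inr (Or.inl hyσE)
            · exact Or.inl (Or.inr ⟨hyW, fun hc => hc.elim hyE hyσE⟩)
        · by_cases h1 : σ y ∈ E
          · exact Or.inr (Or.inl h1)
          · by_cases h2 : σ y ∈ σ ⁻¹' E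
            · rw [Set.mem_preimage, hσσ] at h2
              exact Or.inl (Or.inl h2)
            · exact Or.inr (Or.inr ⟨hσyW, fun hc => hc.elim h1 h2⟩)

/-- For a continuous odd `g : S² → ℝ`, there is a nonempty compact connected subset of
`g⁻¹({0})` invariant under the antipodal map. -/
theorem invariant_connected_zero_set
    (g : Metric.sphere (0 : EuclideanSpace ℝ (Fin 3)) 1 → ℝ)
    (hg : Continuous g) (hodd : ∀ x, g (-x) = -g x) :
    ∃ X : Set (Metric.sphere (0 : EuclideanSpace ℝ (Fin 3)) 1),
      X.Nonempty ∧ IsCompact X ∧ IsConnected X ∧ (-X = X) ∧ X ⊆ g ⁻¹' {0} := by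
  classical
  by_contra hcon
  push_neg at hcon
  set Z : Set Sph := g ⁻¹' {0} with hZdef
  have hZclosed : IsClosed Z := isClosed_singleton.preimage hg
  have hZcompact : IsCompact Z := hZclosed.isCompact
  haveI : CompactSpace Z := isCompact_iff_compactSpace.mp hZcompact
  have hmemneg : ∀ z : Sph, z ∈ Z → -z ∈ Z := by
    intro z hz
    have : g z = 0 := hz
    show g (-z) = 0
    rw [hodd z, this, neg_zero]
  set σ : Z → Z := fun z => ⟨-z.1, hmemneg z.1 z.2⟩ with hσdef
  have hσc : Continuous σ :=
    Continuous.subtype_mk (continuous_neg.comp continuous_subtype_val) _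
  have hσσ : ∀ z, σ (σ z) = z := by
    intro z; apply Subtype.ext; show -(-z.1) = z.1; rw [neg_neg]
  have hσval : ∀ z : Z, ((σ z : Z) : Sph) = -(z : Sph) := fun z => rfl
  -- image of components
  have hσcomp : ∀ z : Z, σ '' connectedComponent z = connectedComponent (σ z) := by
    intro z
    apply Set.Subset.antisymm (hσc.image_connectedComponent_subset z)
    intro y hy
    have h2 : σ y ∈ σ '' connectedComponent (σ z) := Set.mem_image_of_mem σ hy
    have h3 := hσc.image_connectedComponent_subset (σ z) h2
    rw [hσσ z] at h3
    exact ⟨σ y, h3, hσσ y⟩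
  -- no component is symmetric
  have hC1 : ∀ z : Z, connectedComponent (σ z) ≠ connectedComponent z := by
    intro z heq
    set S := connectedComponent z with hSdef
    have hσS : σ '' S = S := by rw [hσcomp z, heq]
    set X : Set Sph := Subtype.val '' S with hXdef
    have hXsub : X ⊆ g ⁻¹' {0} := by rintro x ⟨y, _, rfl⟩; exact y.2
    refine hcon X ⟨(z : Sph), Set.mem_image_of_mem _ mem_connectedComponent⟩
      ((isClosed_connectedComponent.isCompact).image continuous_subtype_val)
      (isConnected_connectedComponent.image _ continuous_subtype_val.continuousOn)
      ?_ hXsub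
    -- -X = X
    ext x
    rw [Set.mem_neg]
    constructor
    · rintro ⟨y, hyS, hyx⟩
      refine ⟨σ y, by rw [← hσS]; exact Set.mem_image_of_mem σ hyS, ?_⟩
      rw [hσval y, hyx, neg_neg]
    · rintro ⟨y, hyS, rfl⟩
      refine ⟨σ y, by rw [← hσS]; exact Set.mem_image_of_mem σ hyS, ?_⟩
      rw [hσval y]
  -- clopen separation around each point
  have hC2 : ∀ z : Z, ∃ E : Set Z, IsClopen E ∧ z ∈ E ∧ ∀ y ∈ E, σ y ∉ E := by
    intro z
    have hdisj : Disjoint (connectedComponent z) (connectedComponent (σ z)) :=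
      connectedComponent_disjoint (hC1 z).symm
    have hpre : σ ⁻¹' connectedComponent z = connectedComponent (σ z) := by
      rw [← hσcomp z]
      ext x
      simp only [Set.mem_preimage, Set.mem_image]
      constructor
      · intro hx; exact ⟨σ x, hx, hσσ x⟩
      · rintro ⟨y, hy, rfl⟩; rw [hσσ]; exact hy
    have hinter : (⋂ F : {F : Set Z // IsClopen F ∧ z ∈ F}, ((F : Set Z) ∩ σ ⁻¹' (F : Set Z)))
        = ∅ := by
      have h1 := connectedComponent_eq_iInter_isClopen z
      have : (⋂ F : {F : Set Z // IsClopen F ∧ z ∈ F}, ((F : Set Z) ∩ σ ⁻¹' (F : Set Z)))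
          = connectedComponent z ∩ σ ⁻¹' (connectedComponent z) := by
        rw [h1, Set.iInter_inter_distrib, ← Set.preimage_iInter]
      rw [this, hpre]
      exact Set.disjoint_iff_inter_eq_empty.mp hdisj
    by_contra hne
    push_neg at hne
    have hne' : ∀ F : {F : Set Z // IsClopen F ∧ z ∈ F},
        ((F : Set Z) ∩ σ ⁻¹' (F : Set Z)).Nonempty := by
      intro F
      obtain ⟨y, hyF, hyσ⟩ := hne F.1 F.2.1 F.2.2
      exact ⟨y, hyF, hyσ⟩
    haveI : Nonempty {F : Set Z // IsClopen F ∧ z ∈ F} :=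
      ⟨⟨Set.univ, isClopen_univ, Set.mem_univ z⟩⟩
    have hdir : Directed (· ⊇ ·)
        (fun F : {F : Set Z // IsClopen F ∧ z ∈ F} => (F : Set Z) ∩ σ ⁻¹' (F : Set Z)) := by
      intro F G
      refine ⟨⟨(F : Set Z) ∩ G, F.2.1.inter G.2.1, F.2.2, G.2.2⟩, ?_, ?_⟩
      · rintro x ⟨⟨hxF, _⟩, hxp⟩
        exact ⟨hxF, hxp.1⟩
      · rintro x ⟨⟨_, hxG⟩, hxp⟩
        exact ⟨hxG, hxp.2⟩
    have := IsCompact.nonempty_iInter_of_directed_nonempty_isCompact_isClosed _ hdir hne'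
      (fun F => (F.2.1.1.inter ((F.2.1.preimage hσc).1)).isCompact)
      (fun F => F.2.1.1.inter ((F.2.1.preimage hσc).1))
    rw [hinter] at this
    exact Set.not_nonempty_empty this
  -- choose the clopen sets and a finite subcover
  choose E hEclopen hEmem hEdisj using hC2
  obtain ⟨s, hs⟩ := isCompact_univ.elim_finite_subcover E (fun z => (hEclopen z).2)
    (fun z _ => Set.mem_iUnion.mpr ⟨z, hEmem z⟩)
  set l : List (Set Z) := s.toList.map E with hldef
  have hlP : ∀ F ∈ l, IsClopen F ∧ ∀ y ∈ F, σ y ∉ F := by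
    intro F hF
    rw [hldef, List.mem_map] at hF
    obtain ⟨z, _, rfl⟩ := hF
    exact ⟨hEclopen z, hEdisj z⟩
  obtain ⟨hWclopen, hWdisj, hWcov⟩ := combineSets_spec hσc hσσ l hlP
  set W : Set Z := combineSets σ l with hWdef
  have hWcov' : ∀ y : Z, y ∈ W ∨ σ y ∈ W := by
    intro y
    have hy := hs (Set.mem_univ y)
    rw [Set.mem_iUnion₂] at hy
    obtain ⟨z, hzs, hyz⟩ := hy
    refine hWcov (E z) ?_ y hyz
    rw [hldef, List.mem_map]
    exact ⟨z, Finset.mem_toList.mpr hzs, rfl⟩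
  -- push to the sphere
  set K : Set Sph := Subtype.val '' W with hKdef
  set N : Set Sph := (fun y : Sph => -y) '' K with hNdef
  have hWcompact : IsCompact W := hWclopen.1.isCompact
  have hKcompact : IsCompact K := hWcompact.image continuous_subtype_val
  have hNcompact : IsCompact N := hKcompact.image continuous_neg
  have hKclosed : IsClosed K := hKcompact.isClosed
  have hNclosed : IsClosed N := hNcompact.isClosed
  have hKN : ∀ x, x ∈ K → x ∈ N → False := by
    rintro x ⟨w, hwW, hwx⟩ hxN
    obtain ⟨x', ⟨w', hw'W, hw'x⟩, hx'⟩ := hxN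
    have hx'' : -x' = x := hx'
    have : (σ w' : Z).1 = x := by rw [hσval, hw'x]; exact hx''
    have hww' : w = σ w' := Subtype.ext (by rw [hwx, this])
    exact hWdisj (σ w') (hww' ▸ hwW) (by rw [hσσ]; exact hw'W)
  have hZKN : ∀ x : Sph, x ∈ Z → x ∈ K ∨ x ∈ N := by
    intro x hx
    rcases hWcov' ⟨x, hx⟩ with h1 | h1
    · exact Or.inl ⟨⟨x, hx⟩, h1, rfl⟩
    · exact Or.inr ⟨-x, ⟨σ ⟨x, hx⟩, h1, rfl⟩, neg_neg x⟩
  -- the odd nonvanishing map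
  have hnegiso : Isometry (fun y : Sph => -y) := by
    apply Isometry.of_dist_eq
    intro a b
    show dist (-a : Sph) (-b : Sph) = dist a b
    rw [Subtype.dist_eq, Subtype.dist_eq, coe_neg_sphere, coe_neg_sphere, dist_neg_neg]
  have hKNN : (fun y : Sph => -y) '' N = K := by
    rw [hNdef, ← Set.image_comp]
    have : ((fun y : Sph => -y) ∘ (fun y : Sph => -y)) = id := by
      funext y; simp
    rw [this, Set.image_id]
  set φ : Sph → ℝ := fun x => Metric.infDist x K - Metric.infDist x N with hφdef
  have hφodd : ∀ x : Sph, φ (-x) = -φ x := by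
    intro x
    have h1 : Metric.infDist (-x : Sph) N = Metric.infDist x K := by
      rw [hNdef, Metric.infDist_image hnegiso]
    have h2 : Metric.infDist (-x : Sph) K = Metric.infDist x N := by
      conv_lhs => rw [← hKNN]
      rw [Metric.infDist_image hnegiso]
    simp only [hφdef]
    rw [h1, h2]; ring
  set hmap : Sph → ℂ := fun x => (g x : ℂ) + (φ x : ℂ) * Complex.I with hmapdef
  have hmapc : Continuous hmap := by
    apply Continuous.add
    · exact Complex.continuous_ofReal.comp hg
    · apply Continuous.mul ?_ continuous_const
      apply Complex.continuous_ofReal.comp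
      exact (Metric.continuous_infDist_pt K).sub (Metric.continuous_infDist_pt N)
  have hmapodd : ∀ x : Sph, hmap (-x) = - hmap x := by
    intro x
    simp only [hmapdef]
    rw [hodd x, hφodd x]
    push_cast
    ring
  have hmapnz : ∀ x : Sph, hmap x ≠ 0 := by
    intro x hx0
    have hre : g x = 0 ∧ φ x = 0 := by
      have hx0' : (g x : ℂ) + (φ x : ℂ) * Complex.I = 0 := hx0
      rw [Complex.ext_iff] at hx0'
      simpa using hx0'
    have hxZ : x ∈ Z := hre.1
    rcases hZKN x hxZ with hxK | hxN
    · have hKne : K.Nonempty := ⟨x, hxK⟩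
      have hNne : N.Nonempty := ⟨-x, Set.mem_image_of_mem _ hxK⟩
      have h1 : Metric.infDist x K = 0 := Metric.infDist_zero_of_mem hxK
      have h2 : 0 < Metric.infDist x N :=
        (IsClosed.notMem_iff_infDist_pos hNclosed hNne).mp (fun hc => hKN x hxK hc)
      have := hre.2
      simp only [hφdef] at this
      rw [h1] at this
      linarith
    · have hKne : K.Nonempty := by
        obtain ⟨y, hyK, _⟩ := hxN
        exact ⟨y, hyK⟩
      have h1 : Metric.infDist x N = 0 := Metric.infDist_zero_of_mem hxN
      have h2 : 0 < Metric.infDist x K :=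
        (IsClosed.notMem_iff_infDist_pos hKclosed hKne).mp (fun hc => hKN x hc hxN)
      have := hre.2
      simp only [hφdef] at this
      rw [h1] at this
      linarith
  exact no_odd_nonvanishing hmap hmapc hmapnz hmapodd
end

section
/- Let g : ℝ → ℝ and h : ℝ² → ℝ be continuous maps such that for all u ∈ ℝ: h(u,u) = 0, h(u, u+1) = π, and g(u+1) = g(u). Let a ≤ b be real numbers such that one of g(a), g(b) equals sup{g(u) : u ∈ ℝ} and the other equals inf{g(u) : u ∈ ℝ}. Then for any θ with 0 < θ < π, there exists (u₁, u₂) ∈ ℝ² with a ≤ u₁ < u₂ < u₁ + 1 ≤ b + 1, g(u₁) = g(u₂), and h(u₁, u₂) = θ. -/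
open Complex

local notation "π" => Real.pi

/-- `φ` is an argument of nonzero `z`. -/
def YIsArg (z : ℂ) (φ : ℝ) : Prop := Complex.exp (φ * Complex.I) = z / ‖z‖

lemma yIsArg_arg {z : ℂ} (hz : z ≠ 0) : YIsArg z z.arg := by
  unfold YIsArg
  rw [eq_div_iff (by simpa using (norm_ne_zero_iff.mpr hz))]
  rw [mul_comm]
  exact Complex.norm_mul_exp_arg_mul_I z

lemma yIsArg_add_two_pi {z : ℂ} {φ : ℝ} (h : YIsArg z φ) : YIsArg z (φ + 2 * π) := by
  unfold YIsArg at *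
  rw [← h]
  push_cast
  rw [add_mul, Complex.exp_add]
  have : Complex.exp (2 * π * Complex.I) = 1 := Complex.exp_two_pi_mul_I
  rw [this, mul_one]

lemma yIsArg_sub_two_pi {z : ℂ} {φ : ℝ} (h : YIsArg z φ) : YIsArg z (φ - 2 * π) := by
  unfold YIsArg at *
  rw [← h]
  push_cast
  rw [sub_mul, Complex.exp_sub]
  have : Complex.exp (2 * π * Complex.I) = 1 := Complex.exp_two_pi_mul_I
  rw [this, div_one]

/-- two real numbers whose `exp (· * I)` agree and are within `2π` are equal. -/
lemma yexp_inj {φ ψ : ℝ} (h : Complex.exp (φ * Complex.I) = Complex.exp (ψ * Complex.I))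
    (hlt : |φ - ψ| < 2 * π) : φ = ψ := by
  have h1 : Complex.exp ((φ - ψ) * Complex.I) = 1 := by
    rw [sub_mul, Complex.exp_sub, h, div_self (Complex.exp_ne_zero _)]
  obtain ⟨n, hn⟩ := Complex.exp_eq_one_iff.mp h1
  have hn' : ((φ - ψ : ℝ) : ℂ) * Complex.I = ((n * (2 * π) : ℝ) : ℂ) * Complex.I := by
    push_cast
    rw [hn]; ring
  have hr : φ - ψ = n * (2 * π) := by
    have := mul_right_cancel₀ Complex.I_ne_zero hn'
    exact_mod_cast this
  have : |(n : ℝ)| * (2 * π) < 2 * π := by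
    calc |(n:ℝ)| * (2 * π) = |(n:ℝ)| * |2 * π| := by
          rw [abs_of_pos (by positivity : (0:ℝ) < 2 * π)]
      _ = |(n:ℝ) * (2 * π)| := (abs_mul _ _).symm
      _ = |φ - ψ| := by rw [← hr]
      _ < 2 * π := hlt
  have hn0 : n = 0 := by
    by_contra h0
    have : (1:ℝ) ≤ |(n:ℝ)| := by exact_mod_cast Int.one_le_abs (by simpa using h0)
    nlinarith [Real.pi_pos]
  rw [hn0] at hr
  simp at hr
  linarith [hr]

noncomputable def yargB (z : ℂ) : ℝ := if 0 < z.arg then z.arg - 2 * π else z.arg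
noncomputable def yargR (z : ℂ) : ℝ := if z.arg < 0 then z.arg + 2 * π else z.arg

lemma yIsArg_yargB {z : ℂ} (hz : z ≠ 0) : YIsArg z (yargB z) := by
  unfold yargB
  split
  · exact yIsArg_sub_two_pi (yIsArg_arg hz)
  · exact yIsArg_arg hz

lemma yIsArg_yargR {z : ℂ} (hz : z ≠ 0) : YIsArg z (yargR z) := by
  unfold yargR
  split
  · exact yIsArg_add_two_pi (yIsArg_arg hz)
  · exact yIsArg_arg hz

lemma yargB_mem {z : ℂ} (hz : z ≠ 0) (him : z.im ≤ 0) : -π ≤ yargB z ∧ yargB z ≤ 0 := by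
  unfold yargB
  split
  case isTrue hpos =>
    have him0 : z.im = 0 := by
      by_contra h'
      have : z.im < 0 := lt_of_le_of_ne him h'
      have := Complex.arg_neg_iff.mpr this
      linarith
    have hre : z.re < 0 := by
      rcases lt_or_ge z.re 0 with h' | h'
      · exact h'
      · exfalso
        have : z.arg = 0 := Complex.arg_eq_zero_iff.mpr ⟨h', him0⟩
        linarith
    have : z.arg = π := Complex.arg_eq_pi_iff.mpr ⟨hre, him0⟩
    constructor <;> (rw [this]; linarith [Real.pi_pos])
  case isFalse hpos =>
    push_neg at hpos
    exact ⟨by linarith [Complex.neg_pi_lt_arg z], hpos⟩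

lemma yargR_mem {z : ℂ} (hz : z ≠ 0) (hre : z.re ≤ 0) :
    π / 2 ≤ yargR z ∧ yargR z ≤ 3 * π / 2 := by
  have habs : π / 2 ≤ |z.arg| := by
    by_contra h'
    push_neg at h'
    rcases Complex.abs_arg_lt_pi_div_two_iff.mp h' with h'' | h''
    · linarith
    · exact hz h''
  unfold yargR
  split
  case isTrue hneg =>
    have h1 : π / 2 ≤ -z.arg := by rwa [abs_of_neg hneg] at habs
    constructor <;> linarith [Complex.neg_pi_lt_arg z, Real.pi_pos]
  case isFalse hneg =>
    push_neg at hneg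
    have : π / 2 ≤ z.arg := by
      rcases abs_cases z.arg with ⟨he, _⟩ | ⟨he, _⟩
      · linarith [he ▸ habs]
      · linarith
    exact ⟨this, by linarith [Complex.arg_le_pi z, Real.pi_pos]⟩

lemma yargT_mem {z : ℂ} (him : 0 ≤ z.im) : 0 ≤ z.arg ∧ z.arg ≤ π :=
  ⟨Complex.arg_nonneg_iff.mpr him, Complex.arg_le_pi z⟩

lemma yargL_mem {z : ℂ} (hre : 0 ≤ z.re) : -(π/2) ≤ z.arg ∧ z.arg ≤ π/2 :=
  abs_le.mp (Complex.abs_arg_le_pi_div_two_iff.mpr hre)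

lemma yclose {z₁ z₂ : ℂ} (h1 : z₁ ≠ 0) (hlt : ‖z₂ - z₁‖ < ‖z₁‖) :
    |Complex.arg (z₂ / z₁)| < π / 2 := by
  apply Complex.abs_arg_lt_pi_div_two_iff.mpr
  left
  have key : ‖z₂ / z₁ - 1‖ < 1 := by
    have : z₂ / z₁ - 1 = (z₂ - z₁) / z₁ := by field_simp
    rw [this, norm_div]
    rw [div_lt_one (norm_pos_iff.mpr h1)]
    exact hlt
  have h2 : |(z₂ / z₁ - 1).re| ≤ ‖z₂ / z₁ - 1‖ := Complex.abs_re_le_norm _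
  have h3 : (z₂ / z₁).re = 1 + (z₂ / z₁ - 1).re := by simp
  have h4 := abs_lt.mp (lt_of_le_of_lt h2 key)
  linarith

lemma ystep {z₁ z₂ : ℂ} (h1 : z₁ ≠ 0) (h2 : z₂ ≠ 0) {φ₁ φ₂ : ℝ}
    (ha1 : YIsArg z₁ φ₁) (ha2 : YIsArg z₂ φ₂)
    (hclose : |Complex.arg (z₂ / z₁)| < π / 2)
    (hdiff : |φ₂ - φ₁| ≤ 3 * π / 2) : Complex.arg (z₂ / z₁) = φ₂ - φ₁ := by
  have hz : z₂ / z₁ ≠ 0 := div_ne_zero h2 h1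
  have e1 : Complex.exp (↑(Complex.arg (z₂ / z₁)) * Complex.I) =
      Complex.exp (↑(φ₂ - φ₁) * Complex.I) := by
    have := yIsArg_arg hz
    unfold YIsArg at this ha1 ha2
    rw [this, norm_div]
    push_cast
    rw [sub_mul, Complex.exp_sub, ha1, ha2]
    have hb1 : (‖z₁‖ : ℂ) ≠ 0 := by
      simpa using norm_ne_zero_iff.mpr h1
    have hb2 : (‖z₂‖ : ℂ) ≠ 0 := by
      simpa using norm_ne_zero_iff.mpr h2
    field_simp
  apply yexp_inj e1
  have := abs_sub_abs_le_abs_sub (Complex.arg (z₂ / z₁)) (φ₂ - φ₁)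
  calc |Complex.arg (z₂ / z₁) - (φ₂ - φ₁)| ≤ |Complex.arg (z₂ / z₁)| + |φ₂ - φ₁| :=
        abs_sub _ _
    _ < 2 * π := by linarith

lemma ysquare {w1 w2 w3 w4 : ℂ} (h1 : w1 ≠ 0) (h2 : w2 ≠ 0) (h3 : w3 ≠ 0) (h4 : w4 ≠ 0)
    (hmul : w1 * w2 = w4 * w3)
    (b1 : |w1.arg| < π / 2) (b2 : |w2.arg| < π / 2) (b3 : |w3.arg| < π / 2)
    (b4 : |w4.arg| < π / 2) :
    w1.arg + w2.arg - w3.arg - w4.arg = 0 := by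
  have habs : (‖w1‖ : ℂ) * ‖w2‖ =
      (‖w4‖ : ℂ) * ‖w3‖ := by
    have := congrArg norm hmul
    rw [norm_mul, norm_mul] at this
    exact_mod_cast this
  have e : Complex.exp (↑(w1.arg + w2.arg - w3.arg - w4.arg) * Complex.I) =
      Complex.exp ((0 : ℝ) * Complex.I) := by
    push_cast
    rw [sub_mul, sub_mul, add_mul, Complex.exp_sub, Complex.exp_sub, Complex.exp_add]
    have e1 := yIsArg_arg h1; have e2 := yIsArg_arg h2
    have e3 := yIsArg_arg h3; have e4 := yIsArg_arg h4
    unfold YIsArg at e1 e2 e3 e4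
    rw [e1, e2, e3, e4]
    have a1 : (‖w1‖ : ℂ) ≠ 0 := by simpa using norm_ne_zero_iff.mpr h1
    have a2 : (‖w2‖ : ℂ) ≠ 0 := by simpa using norm_ne_zero_iff.mpr h2
    have a3 : (‖w3‖ : ℂ) ≠ 0 := by simpa using norm_ne_zero_iff.mpr h3
    have a4 : (‖w4‖ : ℂ) ≠ 0 := by simpa using norm_ne_zero_iff.mpr h4
    rw [zero_mul, Complex.exp_zero]
    field_simp
    linear_combination (‖w3‖ : ℂ) * (‖w4‖ : ℂ) * hmul -
      w4 * w3 * habs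
  have := yexp_inj e (by
    rw [sub_zero]
    calc |w1.arg + w2.arg - w3.arg - w4.arg| ≤ |w1.arg| + |w2.arg| + |w3.arg| + |w4.arg| := by
          have t1 := abs_add_le (w1.arg + w2.arg - w3.arg) (-w4.arg)
          have t2 := abs_add_le (w1.arg + w2.arg) (-w3.arg)
          have t3 := abs_add_le w1.arg w2.arg
          simp only [abs_neg] at t1 t2
          calc |w1.arg + w2.arg - w3.arg - w4.arg| = |(w1.arg + w2.arg - w3.arg) + -w4.arg| := by
                ring_nf
            _ ≤ |w1.arg + w2.arg - w3.arg| + |w4.arg| := t1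
            _ = |(w1.arg + w2.arg) + -w3.arg| + |w4.arg| := by ring_nf
            _ ≤ |w1.arg + w2.arg| + |w3.arg| + |w4.arg| := by linarith
            _ ≤ |w1.arg| + |w2.arg| + |w3.arg| + |w4.arg| := by linarith
      _ < 2 * π := by linarith)
  simpa using this

set_option maxHeartbeats 1000000 in
open Finset in
lemma ymiranda (w : ℝ × ℝ → ℂ) (hw : Continuous w) (a b : ℝ) (hab : a ≤ b)
    (hleft : ∀ t ∈ Set.Icc (0:ℝ) 1, 0 ≤ (w (a, t)).re)
    (hright : ∀ t ∈ Set.Icc (0:ℝ) 1, (w (b, t)).re ≤ 0)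
    (hbot : ∀ s ∈ Set.Icc a b, (w (s, 0)).im ≤ 0)
    (htop : ∀ s ∈ Set.Icc a b, 0 ≤ (w (s, 1)).im) :
    ∃ p ∈ Set.Icc a b ×ˢ Set.Icc (0:ℝ) 1, w p = 0 := by
  by_contra hcon
  push_neg at hcon
  set Q : Set (ℝ × ℝ) := Set.Icc a b ×ˢ Set.Icc (0:ℝ) 1 with hQdef
  have hQ : IsCompact Q := (isCompact_Icc).prod (isCompact_Icc)
  have hQne : Q.Nonempty := ⟨(a, 0), by
    constructor
    · exact ⟨le_refl a, hab⟩
    · exact ⟨le_refl _, zero_le_one⟩⟩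
  -- minimum of |w| on Q is positive
  obtain ⟨p₀, hp₀Q, hp₀min⟩ := hQ.exists_isMinOn hQne
    ((continuous_norm.comp hw).continuousOn (s := Q))
  set ε : ℝ := ‖w p₀‖ with hεdef
  have hε : 0 < ε := by
    have := hcon p₀ hp₀Q
    simpa [hεdef] using norm_pos_iff.mpr this
  have hεle : ∀ p ∈ Q, ε ≤ ‖w p‖ := fun p hp => hp₀min hp
  -- uniform continuity
  have huc := hQ.uniformContinuousOn_of_continuous hw.continuousOn
  rw [Metric.uniformContinuousOn_iff] at huc
  obtain ⟨δ, hδ, hucl⟩ := huc ε hε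
  -- choose grid size
  obtain ⟨m, hm⟩ := exists_nat_gt (max ((b - a) / δ) (1 / δ))
  set n : ℕ := m + 1 with hndef
  have hn0 : (0:ℝ) < (n:ℝ) := by positivity
  have hnba : (b - a) / (n:ℝ) < δ := by
    rw [div_lt_iff₀ hn0]
    have h1 : (b - a) / δ < (n:ℝ) := lt_of_le_of_lt (le_max_left _ _)
      (lt_of_lt_of_le hm (by exact_mod_cast Nat.le_succ m))
    rw [div_lt_iff₀ hδ] at h1
    linarith
  have hn1 : (1:ℝ) / (n:ℝ) < δ := by
    rw [div_lt_iff₀ hn0]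
    have h1 : 1 / δ < (n:ℝ) := lt_of_le_of_lt (le_max_right _ _)
      (lt_of_lt_of_le hm (by exact_mod_cast Nat.le_succ m))
    rw [div_lt_iff₀ hδ] at h1
    linarith
  -- grid
  set x : ℕ → ℝ := fun i => a + (b - a) * i / n with hxdef
  set y : ℕ → ℝ := fun j => (j:ℝ) / n with hydef
  have hx0 : x 0 = a := by simp [hxdef]
  have hxn : x n = b := by simp only [hxdef]; rw [mul_div_assoc, div_self hn0.ne', mul_one]; ring
  have hy0 : y 0 = 0 := by simp [hydef]
  have hyn : y n = 1 := by simp only [hydef]; exact div_self hn0.ne'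
  have hxmem : ∀ i ≤ n, x i ∈ Set.Icc a b := by
    intro i hi
    have h1 : (i:ℝ) ≤ (n:ℝ) := by exact_mod_cast hi
    have h2 : (0:ℝ) ≤ (i:ℝ) := by positivity
    have hba : 0 ≤ b - a := sub_nonneg.mpr hab
    constructor
    · have : 0 ≤ (b - a) * i / n := by positivity
      simp only [hxdef]; linarith
    · have : (b - a) * i / n ≤ b - a := by
        rw [div_le_iff₀ hn0]
        nlinarith
      simp only [hxdef]; linarith
  have hymem : ∀ j ≤ n, y j ∈ Set.Icc (0:ℝ) 1 := by
    intro j hj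
    have h1 : (j:ℝ) ≤ (n:ℝ) := by exact_mod_cast hj
    have h2 : (0:ℝ) ≤ (j:ℝ) := by positivity
    constructor
    · simp only [hydef]; positivity
    · simp only [hydef]; rw [div_le_one hn0]; exact h1
  have hmemQ : ∀ i ≤ n, ∀ j ≤ n, ((x i, y j) : ℝ × ℝ) ∈ Q :=
    fun i hi j hj => ⟨hxmem i hi, hymem j hj⟩
  set v : ℕ → ℕ → ℂ := fun i j => w (x i, y j) with hvdef
  have hne : ∀ i ≤ n, ∀ j ≤ n, v i j ≠ 0 := fun i hi j hj => hcon _ (hmemQ i hi j hj)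
  -- adjacency estimates
  have hadjH : ∀ i < n, ∀ j ≤ n, ‖v (i+1) j - v i j‖ < ε := by
    intro i hi j hj
    have hd : dist ((x (i+1), y j) : ℝ × ℝ) ((x i, y j) : ℝ × ℝ) < δ := by
      rw [Prod.dist_eq]
      have hba : 0 ≤ b - a := sub_nonneg.mpr hab
      have h1 : dist (x (i+1)) (x i) = (b - a) / n := by
        rw [Real.dist_eq]
        have : x (i+1) - x i = (b - a) / n := by
          simp only [hxdef]; push_cast; ring
        rw [this]
        exact abs_of_nonneg (by positivity)
      have h2 : dist (y j) (y j) = 0 := dist_self _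
      rw [h1, h2]
      simp only [max_eq_left (by positivity : (0:ℝ) ≤ (b-a)/(n:ℝ))]
      exact hnba
    have := hucl _ (hmemQ (i+1) hi j hj) _ (hmemQ i (le_of_lt hi) j hj) hd
    rwa [Complex.dist_eq] at this
  have hadjV : ∀ i ≤ n, ∀ j < n, ‖v i (j+1) - v i j‖ < ε := by
    intro i hi j hj
    have hd : dist ((x i, y (j+1)) : ℝ × ℝ) ((x i, y j) : ℝ × ℝ) < δ := by
      rw [Prod.dist_eq]
      have h1 : dist (y (j+1)) (y j) = 1 / n := by
        rw [Real.dist_eq]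
        have : y (j+1) - y j = 1 / n := by
          simp only [hydef]; push_cast; ring
        rw [this]
        exact abs_of_nonneg (by positivity)
      have h2 : dist (x i) (x i) = 0 := dist_self _
      rw [h1, h2]
      simp only [max_eq_right (by positivity : (0:ℝ) ≤ 1/(n:ℝ))]
      exact hn1
    have := hucl _ (hmemQ i hi (j+1) hj) _ (hmemQ i hi j (le_of_lt hj)) hd
    rwa [Complex.dist_eq] at this
  -- small args on edges
  have hH : ∀ i < n, ∀ j ≤ n, |(v (i+1) j / v i j).arg| < π / 2 := by
    intro i hi j hj
    exact yclose (hne i (le_of_lt hi) j hj)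
      (lt_of_lt_of_le (hadjH i hi j hj) (hεle _ (hmemQ i (le_of_lt hi) j hj)))
  have hV : ∀ i ≤ n, ∀ j < n, |(v i (j+1) / v i j).arg| < π / 2 := by
    intro i hi j hj
    exact yclose (hne i hi j (le_of_lt hj))
      (lt_of_lt_of_le (hadjV i hi j hj) (hεle _ (hmemQ i hi j (le_of_lt hj))))
  set A : ℕ → ℕ → ℝ := fun i j => (v (i+1) j / v i j).arg with hAdef
  set B : ℕ → ℕ → ℝ := fun i j => (v i (j+1) / v i j).arg with hBdef
  -- square identity
  have hsq : ∀ i < n, ∀ j < n, A i j + B (i+1) j - A i (j+1) - B i j = 0 := by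
    intro i hi j hj
    have hi' : i ≤ n := le_of_lt hi
    have hj' : j ≤ n := le_of_lt hj
    have hi1 : i + 1 ≤ n := hi
    have hj1 : j + 1 ≤ n := hj
    have n00 := hne i hi' j hj'
    have n10 := hne (i+1) hi1 j hj'
    have n01 := hne i hi' (j+1) hj1
    have n11 := hne (i+1) hi1 (j+1) hj1
    exact ysquare (div_ne_zero n10 n00) (div_ne_zero n11 n10) (div_ne_zero n11 n01)
      (div_ne_zero n01 n00)
      (by field_simp)
      (hH i hi j hj') (hV (i+1) hi1 j hj) (hH i hi (j+1) hj1) (hV i hi' j hj)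
  -- total sum vanishes
  have hbig : (∑ i ∈ range n, (A i 0 - A i n)) + (∑ j ∈ range n, (B n j - B 0 j)) = 0 := by
    have h0 : ∑ i ∈ range n, ∑ j ∈ range n,
        ((A i j - A i (j+1)) + (B (i+1) j - B i j)) = 0 :=
      Finset.sum_eq_zero fun i hi => Finset.sum_eq_zero fun j hj => by
        have := hsq i (mem_range.mp hi) j (mem_range.mp hj); linarith
    rw [← h0]
    simp only [Finset.sum_add_distrib]
    congr 1
    · exact (Finset.sum_congr rfl fun i _ => (Finset.sum_range_sub' (A i) n)).symm
    · rw [Finset.sum_comm]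
      exact (Finset.sum_congr rfl fun j _ => (Finset.sum_range_sub (fun i => B i j) n)).symm
  -- telescoping along the four edges
  have hbotedge : ∑ i ∈ range n, A i 0 = yargB (v n 0) - yargB (v 0 0) := by
    rw [show ∑ i ∈ range n, A i 0 =
        ∑ i ∈ range n, (yargB (v (i+1) 0) - yargB (v i 0)) from
      Finset.sum_congr rfl fun i hi => by
        have hi' := mem_range.mp hi
        have hz1 := hne i (le_of_lt hi') 0 (Nat.zero_le n)
        have hz2 := hne (i+1) hi' 0 (Nat.zero_le n)
        have him1 : (v i 0).im ≤ 0 := by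
          simpa [hvdef, hy0] using hbot (x i) (hxmem i (le_of_lt hi'))
        have him2 : (v (i+1) 0).im ≤ 0 := by
          simpa [hvdef, hy0] using hbot (x (i+1)) (hxmem (i+1) hi')
        have m1 := yargB_mem hz1 him1
        have m2 := yargB_mem hz2 him2
        exact ystep hz1 hz2 (yIsArg_yargB hz1) (yIsArg_yargB hz2) (hH i hi' 0 (Nat.zero_le n))
          (by rw [abs_le]; constructor <;> [linarith [Real.pi_pos]; linarith [Real.pi_pos]])]
    exact Finset.sum_range_sub (fun i => yargB (v i 0)) n
  have htopedge : ∑ i ∈ range n, A i n = (v n n).arg - (v 0 n).arg := by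
    rw [show ∑ i ∈ range n, A i n =
        ∑ i ∈ range n, ((v (i+1) n).arg - (v i n).arg) from
      Finset.sum_congr rfl fun i hi => by
        have hi' := mem_range.mp hi
        have hz1 := hne i (le_of_lt hi') n le_rfl
        have hz2 := hne (i+1) hi' n le_rfl
        have him1 : 0 ≤ (v i n).im := by
          simpa [hvdef, hyn] using htop (x i) (hxmem i (le_of_lt hi'))
        have him2 : 0 ≤ (v (i+1) n).im := by
          simpa [hvdef, hyn] using htop (x (i+1)) (hxmem (i+1) hi')
        have m1 := yargT_mem him1
        have m2 := yargT_mem him2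
        exact ystep hz1 hz2 (yIsArg_arg hz1) (yIsArg_arg hz2) (hH i hi' n le_rfl)
          (by rw [abs_le]; constructor <;> [linarith [Real.pi_pos]; linarith [Real.pi_pos]])]
    exact Finset.sum_range_sub (fun i => (v i n).arg) n
  have hrightedge : ∑ j ∈ range n, B n j = yargR (v n n) - yargR (v n 0) := by
    rw [show ∑ j ∈ range n, B n j =
        ∑ j ∈ range n, (yargR (v n (j+1)) - yargR (v n j)) from
      Finset.sum_congr rfl fun j hj => by
        have hj' := mem_range.mp hj
        have hz1 := hne n le_rfl j (le_of_lt hj')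
        have hz2 := hne n le_rfl (j+1) hj'
        have hre1 : (v n j).re ≤ 0 := by
          simpa [hvdef, hxn] using hright (y j) (hymem j (le_of_lt hj'))
        have hre2 : (v n (j+1)).re ≤ 0 := by
          simpa [hvdef, hxn] using hright (y (j+1)) (hymem (j+1) hj')
        have m1 := yargR_mem hz1 hre1
        have m2 := yargR_mem hz2 hre2
        exact ystep hz1 hz2 (yIsArg_yargR hz1) (yIsArg_yargR hz2) (hV n le_rfl j hj')
          (by rw [abs_le]; constructor <;> [linarith [Real.pi_pos]; linarith [Real.pi_pos]])]
    exact Finset.sum_range_sub (fun j => yargR (v n j)) n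
  have hleftedge : ∑ j ∈ range n, B 0 j = (v 0 n).arg - (v 0 0).arg := by
    rw [show ∑ j ∈ range n, B 0 j =
        ∑ j ∈ range n, ((v 0 (j+1)).arg - (v 0 j).arg) from
      Finset.sum_congr rfl fun j hj => by
        have hj' := mem_range.mp hj
        have hz1 := hne 0 (Nat.zero_le n) j (le_of_lt hj')
        have hz2 := hne 0 (Nat.zero_le n) (j+1) hj'
        have hre1 : 0 ≤ (v 0 j).re := by
          simpa [hvdef, hx0] using hleft (y j) (hymem j (le_of_lt hj'))
        have hre2 : 0 ≤ (v 0 (j+1)).re := by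
          simpa [hvdef, hx0] using hleft (y (j+1)) (hymem (j+1) hj')
        have m1 := yargL_mem hre1
        have m2 := yargL_mem hre2
        exact ystep hz1 hz2 (yIsArg_arg hz1) (yIsArg_arg hz2) (hV 0 (Nat.zero_le n) j hj')
          (by rw [abs_le]; constructor <;> [linarith [Real.pi_pos]; linarith [Real.pi_pos]])]
    exact Finset.sum_range_sub (fun j => (v 0 j).arg) n
  -- corner identities
  have hc1 : (v 0 0).arg = yargB (v 0 0) := by
    have hz := hne 0 (Nat.zero_le n) 0 (Nat.zero_le n)
    have hre : 0 ≤ (v 0 0).re := by simpa [hvdef, hx0] using hleft (y 0) (hymem 0 (Nat.zero_le n))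
    have him : (v 0 0).im ≤ 0 := by simpa [hvdef, hy0] using hbot (x 0) (hxmem 0 (Nat.zero_le n))
    have m1 := yargL_mem hre
    have m2 := yargB_mem hz him
    refine yexp_inj ?_ ?_
    · have e1 := yIsArg_arg hz; have e2 := yIsArg_yargB hz
      unfold YIsArg at e1 e2; rw [e1, e2]
    · rw [abs_lt]; constructor <;> linarith [Real.pi_pos]
  have hc2 : yargR (v n 0) = yargB (v n 0) + 2 * π := by
    have hz := hne n le_rfl 0 (Nat.zero_le n)
    have hre : (v n 0).re ≤ 0 := by simpa [hvdef, hxn] using hright (y 0) (hymem 0 (Nat.zero_le n))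
    have him : (v n 0).im ≤ 0 := by simpa [hvdef, hy0] using hbot (x n) (hxmem n le_rfl)
    have m1 := yargR_mem hz hre
    have m2 := yargB_mem hz him
    refine yexp_inj ?_ ?_
    · have e1 := yIsArg_yargR hz; have e2 := yIsArg_add_two_pi (yIsArg_yargB hz)
      unfold YIsArg at e1 e2; rw [e1, e2]
    · rw [abs_lt]; constructor <;> linarith [Real.pi_pos]
  have hc3 : yargR (v n n) = (v n n).arg := by
    have hz := hne n le_rfl n le_rfl
    have hre : (v n n).re ≤ 0 := by simpa [hvdef, hxn] using hright (y n) (hymem n le_rfl)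
    have him : 0 ≤ (v n n).im := by simpa [hvdef, hyn] using htop (x n) (hxmem n le_rfl)
    have m1 := yargR_mem hz hre
    have m2 := yargT_mem him
    refine yexp_inj ?_ ?_
    · have e1 := yIsArg_yargR hz; have e2 := yIsArg_arg hz
      unfold YIsArg at e1 e2; rw [e1, e2]
    · rw [abs_lt]; constructor <;> linarith [Real.pi_pos]
  -- contradiction
  rw [Finset.sum_sub_distrib, Finset.sum_sub_distrib, hbotedge, htopedge, hrightedge,
    hleftedge, hc1, hc2, hc3] at hbig
  nlinarith [Real.pi_pos]

lemma yang_aux (g : ℝ → ℝ) (h : ℝ → ℝ → ℝ)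
    (hg : Continuous g) (hh : Continuous fun p : ℝ × ℝ => h p.1 p.2)
    (h0 : ∀ u, h u u = 0) (hπ : ∀ u, h u (u + 1) = π)
    (a b : ℝ) (hab : a ≤ b)
    (hamax : ∀ x, g x ≤ g a) (hbmin : ∀ x, g b ≤ g x)
    (θ : ℝ) (hθ0 : 0 < θ) (hθπ : θ < π) :
    ∃ u₁ u₂ : ℝ, a ≤ u₁ ∧ u₁ < u₂ ∧ u₂ < u₁ + 1 ∧ u₁ + 1 ≤ b + 1 ∧
      g u₁ = g u₂ ∧ h u₁ u₂ = θ := by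
  set w : ℝ × ℝ → ℂ := fun p =>
    ((g p.1 - g (p.1 + p.2) : ℝ) : ℂ) + ((h p.1 (p.1 + p.2) - θ : ℝ) : ℂ) * Complex.I
    with hwdef
  have hre : ∀ p, (w p).re = g p.1 - g (p.1 + p.2) := by
    intro p; simp [hwdef]
  have him : ∀ p, (w p).im = h p.1 (p.1 + p.2) - θ := by
    intro p; simp [hwdef]
  have hwc : Continuous w := by
    apply Continuous.add
    · exact Complex.continuous_ofReal.comp
        ((hg.comp continuous_fst).sub (hg.comp (continuous_fst.add continuous_snd)))
    · apply Continuous.mul _ continuous_const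
      exact Complex.continuous_ofReal.comp
        ((hh.comp (continuous_fst.prodMk (continuous_fst.add continuous_snd))).sub
          continuous_const)
  obtain ⟨p, hpQ, hpz⟩ := ymiranda w hwc a b hab
    (fun t _ => by rw [hre]; simpa using sub_nonneg.mpr (hamax (a + t)))
    (fun t _ => by rw [hre]; simpa using sub_nonpos.mpr (hbmin (b + t)))
    (fun s _ => by rw [him]; simp [h0 s]; linarith)
    (fun s _ => by rw [him]; simp [hπ s]; linarith)
  obtain ⟨⟨hs1, hs2⟩, ⟨ht1, ht2⟩⟩ := hpQ
  have hre0 : g p.1 - g (p.1 + p.2) = 0 := by rw [← hre p, hpz]; simp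
  have him0 : h p.1 (p.1 + p.2) - θ = 0 := by rw [← him p, hpz]; simp
  have ht1' : 0 < p.2 := by
    rcases lt_or_eq_of_le ht1 with h' | h'
    · exact h'
    · exfalso
      rw [← h'] at him0
      rw [show p.1 + (0:ℝ) = p.1 by ring, h0 p.1] at him0
      linarith
  have ht2' : p.2 < 1 := by
    rcases lt_or_eq_of_le ht2 with h' | h'
    · exact h'
    · exfalso
      rw [h'] at him0
      rw [hπ p.1] at him0
      linarith
  exact ⟨p.1, p.1 + p.2, hs1, by linarith, by linarith, by linarith,
    by linarith [hre0], by linarith [him0]⟩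

/-- Yang's Lemma 5.2. -/
theorem yang_lemma_5_2 (g : ℝ → ℝ) (h : ℝ → ℝ → ℝ)
    (hg : Continuous g) (hh : Continuous fun p : ℝ × ℝ => h p.1 p.2)
    (h0 : ∀ u, h u u = 0) (hπ : ∀ u, h u (u + 1) = Real.pi)
    (hper : ∀ u, g (u + 1) = g u)
    (a b : ℝ) (hab : a ≤ b)
    (hext : (g a = sSup (Set.range g) ∧ g b = sInf (Set.range g)) ∨
            (g b = sSup (Set.range g) ∧ g a = sInf (Set.range g)))
    (θ : ℝ) (hθ0 : 0 < θ) (hθπ : θ < Real.pi) :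
    ∃ u₁ u₂ : ℝ, a ≤ u₁ ∧ u₁ < u₂ ∧ u₂ < u₁ + 1 ∧ u₁ + 1 ≤ b + 1 ∧
      g u₁ = g u₂ ∧ h u₁ u₂ = θ := by
  have hperiodic : Function.Periodic g 1 := hper
  have hrange : g '' Set.Icc 0 (0 + 1) = Set.range g :=
    hperiodic.image_Icc one_pos 0
  have hcomp : IsCompact (g '' Set.Icc 0 (0 + 1)) := (isCompact_Icc).image hg
  have hbdda : BddAbove (Set.range g) := hrange ▸ hcomp.bddAbove
  have hbddb : BddBelow (Set.range g) := hrange ▸ hcomp.bddBelow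
  rcases hext with ⟨hsup, hinf⟩ | ⟨hsup, hinf⟩
  · exact yang_aux g h hg hh h0 hπ a b hab
      (fun x => hsup ▸ le_csSup hbdda (Set.mem_range_self x))
      (fun x => hinf ▸ csInf_le hbddb (Set.mem_range_self x))
      θ hθ0 hθπ
  · obtain ⟨u₁, u₂, c1, c2, c3, c4, c5, c6⟩ := yang_aux (fun u => -g u) h
      (hg.neg) hh h0 hπ a b hab
      (fun x => by
        simp only [neg_le_neg_iff]
        exact hinf ▸ csInf_le hbddb (Set.mem_range_self x))
      (fun x => by
        simp only [neg_le_neg_iff]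
        exact hsup ▸ le_csSup hbdda (Set.mem_range_self x))
      θ hθ0 hθπ
    exact ⟨u₁, u₂, c1, c2, c3, c4, by simpa using c5, c6⟩
end

section
/- Let g : S² → ℝ be continuous with g(-x) = -g(x) for all x, and suppose that for every n ≥ 1 there exists a nonempty compact connected subset Pₙ of S² invariant under the antipodal map with |g(x)| < 1/n for all x ∈ Pₙ. Then there exists a nonempty compact connected subset X of g⁻¹({0}) invariant under the antipodal map. -/
open Metric TopologicalSpace Set Filter

/-- Negation on the unit sphere is an isometry. -/
lemma sphere_neg_isometry :
    Isometry (fun x : Metric.sphere (0 : EuclideanSpace ℝ (Fin 3)) 1 => -x) := by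
  intro x y
  rw [Subtype.edist_eq, Subtype.edist_eq, coe_neg_sphere, coe_neg_sphere, edist_neg_neg]

lemma neg_set_eq_image {α : Type*} [InvolutiveNeg α] (s : Set α) :
    -s = (fun x => -x) '' s := by
  ext x
  constructor
  · intro hx; exact ⟨-x, hx, neg_neg x⟩
  · rintro ⟨y, hy, rfl⟩; simpa using hy

/-- If a continuous odd `g : S² → ℝ` admits, for each `n ≥ 1`, a nonempty compact connected
antipodally invariant set on which `|g| < 1/n`, then `g⁻¹({0})` contains a nonempty compact
connected antipodally invariant set. -/
theorem invariant_zero_set_of_approx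
    (g : Metric.sphere (0 : EuclideanSpace ℝ (Fin 3)) 1 → ℝ)
    (hg : Continuous g) (hodd : ∀ x, g (-x) = -g x)
    (hP : ∀ n : ℕ, 1 ≤ n →
      ∃ P : Set (Metric.sphere (0 : EuclideanSpace ℝ (Fin 3)) 1),
        P.Nonempty ∧ IsCompact P ∧ IsConnected P ∧ (-P = P) ∧ ∀ x ∈ P, |g x| < 1 / n) :
    ∃ X : Set (Metric.sphere (0 : EuclideanSpace ℝ (Fin 3)) 1),
      X.Nonempty ∧ IsCompact X ∧ IsConnected X ∧ (-X = X) ∧ X ⊆ g ⁻¹' {0} := by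
  choose P hPne hPcomp hPconn hPinv hPsmall using fun n : ℕ => hP (n + 1) (Nat.le_add_left 1 n)
  -- package into `NonemptyCompacts`
  set Q : ℕ → NonemptyCompacts _ := fun n => ⟨⟨P n, hPcomp n⟩, hPne n⟩ with hQ
  obtain ⟨K, -, φ, hφ, hconv⟩ :=
    isCompact_univ.tendsto_subseq (x := Q) (fun n => Set.mem_univ _)
  have hKne : (K : Set (Metric.sphere (0 : EuclideanSpace ℝ (Fin 3)) 1)).Nonempty := K.nonempty
  have hKcomp : IsCompact (K : Set (Metric.sphere (0 : EuclideanSpace ℝ (Fin 3)) 1)) := K.isCompact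
  have hKclosed : IsClosed (K : Set (Metric.sphere (0 : EuclideanSpace ℝ (Fin 3)) 1)) := hKcomp.isClosed
  -- distances to the approximating sets tend to 0
  have hdist : Tendsto (fun n => Metric.hausdorffDist (P (φ n)) (K : Set (Metric.sphere (0 : EuclideanSpace ℝ (Fin 3)) 1))) atTop (nhds 0) := by
    have h0 : Tendsto (fun n => dist (Q (φ n)) K) atTop (nhds 0) :=
      tendsto_iff_dist_tendsto_zero.1 hconv
    have h0' := h0; simp only [NonemptyCompacts.dist_eq] at h0'; exact h0'
  have hfin : ∀ n, EMetric.hausdorffEdist (P (φ n)) (K : Set (Metric.sphere (0 : EuclideanSpace ℝ (Fin 3)) 1)) ≠ ⊤ := fun n =>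
    Metric.hausdorffEdist_ne_top_of_nonempty_of_bounded (hPne _) hKne
      (hPcomp _).isBounded hKcomp.isBounded
  refine ⟨(K : Set (Metric.sphere (0 : EuclideanSpace ℝ (Fin 3)) 1)), hKne, hKcomp, ⟨hKne, ?_⟩, ?_, ?_⟩
  · -- preconnectedness of the limit set
    rw [isPreconnected_iff_subset_of_disjoint_closed]
    intro A B hA hB hcover hAB
    by_contra hK
    push_neg at hK
    -- both pieces are nonempty
    have hAne : ((K : Set (Metric.sphere (0 : EuclideanSpace ℝ (Fin 3)) 1)) ∩ A).Nonempty := by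
      by_contra h
      rw [Set.not_nonempty_iff_eq_empty] at h
      refine hK.2 fun x hx => ?_
      rcases hcover hx with h' | h'
      · exact absurd (Set.eq_empty_iff_forall_notMem.1 h x ⟨hx, h'⟩) (by simp)
      · exact h'
    have hBne : ((K : Set (Metric.sphere (0 : EuclideanSpace ℝ (Fin 3)) 1)) ∩ B).Nonempty := by
      by_contra h
      rw [Set.not_nonempty_iff_eq_empty] at h
      refine hK.1 fun x hx => ?_
      rcases hcover hx with h' | h'
      · exact h'
      · exact absurd (Set.eq_empty_iff_forall_notMem.1 h x ⟨hx, h'⟩) (by simp)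
    set A' := (K : Set (Metric.sphere (0 : EuclideanSpace ℝ (Fin 3)) 1)) ∩ A with hA'
    set B' := (K : Set (Metric.sphere (0 : EuclideanSpace ℝ (Fin 3)) 1)) ∩ B with hB'
    have hA'c : IsCompact A' := hKcomp.inter_right hA
    have hB'c : IsCompact B' := hKcomp.inter_right hB
    have hdisj : Disjoint A' B' := by
      rw [Set.disjoint_iff_inter_eq_empty]
      have he : A' ∩ B' = (K : Set (Metric.sphere (0 : EuclideanSpace ℝ (Fin 3)) 1)) ∩ (A ∩ B) := by
        rw [hA', hB']; ext x; simp only [Set.mem_inter_iff]; tauto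
      rw [he]
      rw [Set.eq_empty_iff_forall_notMem] at hAB ⊢
      exact hAB
    obtain ⟨δ, hδ, hthick⟩ := hdisj.exists_thickenings hA'c hB'c.isClosed
    -- choose n with hausdorffDist < δ
    obtain ⟨n, hn⟩ := Metric.tendsto_atTop.1 hdist δ hδ
    have hlt : Metric.hausdorffDist (P (φ n)) (K : Set (Metric.sphere (0 : EuclideanSpace ℝ (Fin 3)) 1)) < δ := by
      have h1 := hn n le_rfl
      rw [Real.dist_0_eq_abs] at h1
      exact lt_of_abs_lt h1
    -- P (φ n) is contained in the union of thickenings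
    have hsub : P (φ n) ⊆ Metric.thickening δ A' ∪ Metric.thickening δ B' := by
      intro x hx
      obtain ⟨y, hy, hxy⟩ := Metric.exists_dist_lt_of_hausdorffDist_lt hx hlt (hfin n)
      rcases hcover hy with hyA | hyB
      · exact Or.inl (Metric.mem_thickening_iff.2 ⟨y, ⟨hy, hyA⟩, hxy⟩)
      · exact Or.inr (Metric.mem_thickening_iff.2 ⟨y, ⟨hy, hyB⟩, hxy⟩)
    have hmeetA : (P (φ n) ∩ Metric.thickening δ A').Nonempty := by
      obtain ⟨a, ha⟩ := hAne
      obtain ⟨z, hz, haz⟩ :=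
        Metric.exists_dist_lt_of_hausdorffDist_lt' (y := a) ha.1 hlt (hfin n)
      exact ⟨z, hz, Metric.mem_thickening_iff.2 ⟨a, ha, haz⟩⟩
    have hmeetB : (P (φ n) ∩ Metric.thickening δ B').Nonempty := by
      obtain ⟨b, hb⟩ := hBne
      obtain ⟨z, hz, hbz⟩ :=
        Metric.exists_dist_lt_of_hausdorffDist_lt' (y := b) hb.1 hlt (hfin n)
      exact ⟨z, hz, Metric.mem_thickening_iff.2 ⟨b, hb, hbz⟩⟩
    obtain ⟨x, -, hx1, hx2⟩ := (hPconn (φ n)).isPreconnected _ _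
      Metric.isOpen_thickening Metric.isOpen_thickening hsub hmeetA hmeetB
    exact Set.disjoint_left.1 hthick hx1 hx2
  · -- antipodal invariance
    have hnegK_comp : IsCompact (-(K : Set (Metric.sphere (0 : EuclideanSpace ℝ (Fin 3)) 1))) := by
      rw [neg_set_eq_image]
      exact hKcomp.image continuous_neg
    have hfin' : EMetric.hausdorffEdist (-(K : Set (Metric.sphere (0 : EuclideanSpace ℝ (Fin 3)) 1))) (K : Set (Metric.sphere (0 : EuclideanSpace ℝ (Fin 3)) 1)) ≠ ⊤ :=
      Metric.hausdorffEdist_ne_top_of_nonempty_of_bounded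
        (by rw [neg_set_eq_image]; exact hKne.image _) hKne hnegK_comp.isBounded
        hKcomp.isBounded
    have key : Metric.hausdorffDist (-(K : Set (Metric.sphere (0 : EuclideanSpace ℝ (Fin 3)) 1))) (K : Set (Metric.sphere (0 : EuclideanSpace ℝ (Fin 3)) 1)) = 0 := by
      refine le_antisymm ?_ Metric.hausdorffDist_nonneg
      have hbound : ∀ n, Metric.hausdorffDist (-(K : Set (Metric.sphere (0 : EuclideanSpace ℝ (Fin 3)) 1))) (K : Set (Metric.sphere (0 : EuclideanSpace ℝ (Fin 3)) 1)) ≤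
          2 * Metric.hausdorffDist (P (φ n)) (K : Set (Metric.sphere (0 : EuclideanSpace ℝ (Fin 3)) 1)) := by
        intro n
        have hfinn : EMetric.hausdorffEdist (-(K : Set (Metric.sphere (0 : EuclideanSpace ℝ (Fin 3)) 1))) (P (φ n)) ≠ ⊤ :=
          Metric.hausdorffEdist_ne_top_of_nonempty_of_bounded
            (by rw [neg_set_eq_image]; exact hKne.image _) (hPne _)
            hnegK_comp.isBounded (hPcomp _).isBounded
        have htri := Metric.hausdorffDist_triangle (u := (K : Set (Metric.sphere (0 : EuclideanSpace ℝ (Fin 3)) 1))) hfinn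
        have himg : Metric.hausdorffDist (-(K : Set (Metric.sphere (0 : EuclideanSpace ℝ (Fin 3)) 1))) (P (φ n)) =
            Metric.hausdorffDist (P (φ n)) (K : Set (Metric.sphere (0 : EuclideanSpace ℝ (Fin 3)) 1)) := by
          have h2 : Metric.hausdorffDist (-(K : Set (Metric.sphere (0 : EuclideanSpace ℝ (Fin 3)) 1))) (-(P (φ n))) =
              Metric.hausdorffDist (K : Set (Metric.sphere (0 : EuclideanSpace ℝ (Fin 3)) 1)) (P (φ n)) := by
            rw [neg_set_eq_image, neg_set_eq_image]
            exact Metric.hausdorffDist_image sphere_neg_isometry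
          rw [hPinv (φ n)] at h2
          rw [h2, Metric.hausdorffDist_comm]
        calc Metric.hausdorffDist (-(K : Set (Metric.sphere (0 : EuclideanSpace ℝ (Fin 3)) 1))) (K : Set (Metric.sphere (0 : EuclideanSpace ℝ (Fin 3)) 1))
            ≤ Metric.hausdorffDist (-(K : Set (Metric.sphere (0 : EuclideanSpace ℝ (Fin 3)) 1))) (P (φ n)) +
              Metric.hausdorffDist (P (φ n)) (K : Set (Metric.sphere (0 : EuclideanSpace ℝ (Fin 3)) 1)) := htri
          _ = 2 * Metric.hausdorffDist (P (φ n)) (K : Set (Metric.sphere (0 : EuclideanSpace ℝ (Fin 3)) 1)) := by rw [himg]; ring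
      have hlim : Tendsto (fun n => 2 * Metric.hausdorffDist (P (φ n)) (K : Set (Metric.sphere (0 : EuclideanSpace ℝ (Fin 3)) 1)))
          atTop (nhds 0) := by
        simpa using hdist.const_mul 2
      exact le_of_tendsto_of_tendsto' tendsto_const_nhds hlim hbound
    have hnegK_closed : IsClosed (-(K : Set (Metric.sphere (0 : EuclideanSpace ℝ (Fin 3)) 1))) := hnegK_comp.isClosed
    exact (IsClosed.hausdorffDist_zero_iff_eq hnegK_closed hKclosed hfin').1 key
  · -- contained in the zero set of g
    intro x hx
    simp only [Set.mem_preimage, Set.mem_singleton_iff]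
    by_contra hgx
    have hc : 0 < |g x| := abs_pos.2 hgx
    obtain ⟨δ, hδ, hcont⟩ := Metric.continuous_iff.1 hg x (|g x| / 2) (by linarith)
    obtain ⟨n₀, hn₀⟩ := exists_nat_one_div_lt (show (0:ℝ) < |g x| / 2 by linarith)
    obtain ⟨n₁, hn₁⟩ := Metric.tendsto_atTop.1 hdist δ hδ
    set n := max n₀ n₁
    have hlt : Metric.hausdorffDist (P (φ n)) (K : Set (Metric.sphere (0 : EuclideanSpace ℝ (Fin 3)) 1)) < δ := by
      have h1 := hn₁ n (le_max_right _ _)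
      rw [Real.dist_0_eq_abs] at h1
      exact lt_of_abs_lt h1
    obtain ⟨y, hy, hxy⟩ :=
      Metric.exists_dist_lt_of_hausdorffDist_lt' (y := x) hx hlt (hfin n)
    have hsmall := hPsmall (φ n) y hy
    have hclose := hcont y hxy
    have hclose' : |g y - g x| < |g x| / 2 := by rwa [Real.dist_eq] at hclose
    have hgylarge : |g x| / 2 < |g y| := by
      have h := abs_sub_abs_le_abs_sub (g x) (g y)
      rw [abs_sub_comm] at h
      linarith
    have hmono : (1 : ℝ) / (↑(φ n) + 1) ≤ 1 / (↑n₀ + 1) := by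
      have h1 : (n₀ : ℝ) ≤ (φ n : ℝ) := by
        exact_mod_cast le_trans (le_max_left n₀ n₁) (hφ.le_apply)
      apply one_div_le_one_div_of_le (by positivity)
      linarith
    have hfinal : |g y| < |g x| / 2 := by
      have hcast : ((φ n + 1 : ℕ) : ℝ) = (φ n : ℝ) + 1 := by push_cast; ring
      calc |g y| < 1 / ((φ n + 1 : ℕ) : ℝ) := hsmall
        _ = 1 / ((φ n : ℝ) + 1) := by rw [hcast]
        _ ≤ 1 / (↑n₀ + 1) := hmono
        _ < |g x| / 2 := hn₀
    linarith
end

section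
/- Let X be a nonempty compact connected subset of S² invariant under the antipodal map, and let f : X → ℝ be continuous with f(x) = f(-x) for all x ∈ X. Then there exist x, y ∈ X with ⟪x, y⟫ = 0 and f(x) = f(y). -/
open Finset

namespace YangAux

/-- sign of `P k l`, with a tie-breaking rule at `0` that is symmetric and flips
when one index crosses `N`. -/
noncomputable def sg (N : ℕ) (P : ℕ → ℕ → ℝ) (k l : ℕ) : ℤ :=
  if 0 < P k l then 1 else if P k l < 0 then -1 else if (k < N ↔ l < N) then 1 else -1

/-- sign of `Fv k - Fv l` (with value `1` on ties). -/
noncomputable def zg (Fv : ℕ → ℝ) (k l : ℕ) : ℤ := if Fv k < Fv l then -1 else 1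

noncomputable def vv (N : ℕ) (P : ℕ → ℕ → ℝ) (Fv : ℕ → ℝ) (k l : ℕ) : ℤ :=
  zg Fv k l * (sg N P k l - sg N P k (l + 1))

noncomputable def ww (N : ℕ) (P : ℕ → ℕ → ℝ) (Fv : ℕ → ℝ) (k l : ℕ) : ℤ :=
  zg Fv k l * (sg N P k l - sg N P (k + 1) l)

lemma sg_cases (N : ℕ) (P : ℕ → ℕ → ℝ) (k l : ℕ) : sg N P k l = 1 ∨ sg N P k l = -1 := by
  unfold sg; split_ifs <;> simp

lemma zg_cases (Fv : ℕ → ℝ) (k l : ℕ) : zg Fv k l = 1 ∨ zg Fv k l = -1 := by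
  unfold zg; split_ifs <;> simp

lemma sg_one_nonneg {N : ℕ} {P : ℕ → ℕ → ℝ} {k l : ℕ} (h : sg N P k l = 1) : 0 ≤ P k l := by
  unfold sg at h
  split_ifs at h with h1 h2 h3 <;> first | linarith | exact absurd h (by decide)

lemma sg_negone_nonpos {N : ℕ} {P : ℕ → ℕ → ℝ} {k l : ℕ} (h : sg N P k l = -1) : P k l ≤ 0 := by
  unfold sg at h
  split_ifs at h with h1 h2 h3 <;> first | linarith | exact absurd h (by decide)

/-- A "wall" between two cells forces both values of `P` to be `δ`-small. -/
lemma wall {N : ℕ} {P : ℕ → ℕ → ℝ} {δ : ℝ} {k l k' l' : ℕ}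
    (hst : |P k l - P k' l'| < δ) (hw : sg N P k l ≠ sg N P k' l') :
    |P k l| < δ ∧ |P k' l'| < δ := by
  obtain ⟨hd1, hd2⟩ := abs_lt.mp hst
  rcases sg_cases N P k l with h1 | h1 <;> rcases sg_cases N P k' l' with h2 | h2
  · exact absurd (h1.trans h2.symm) hw
  · have a1 := sg_one_nonneg h1
    have a2 := sg_negone_nonpos h2
    constructor <;> (rw [abs_lt]; constructor <;> linarith)
  · have a1 := sg_negone_nonpos h1
    have a2 := sg_one_nonneg h2
    constructor <;> (rw [abs_lt]; constructor <;> linarith)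
  · exact absurd (h1.trans h2.symm) hw

lemma zg_congr {Fv : ℕ → ℝ} {k l k' l' : ℕ} (h : Fv k < Fv l ↔ Fv k' < Fv l') :
    zg Fv k l = zg Fv k' l' := by
  unfold zg
  split_ifs with h1 h2 h3
  · rfl
  · exact absurd (h.mp h1) h2
  · exact absurd (h.mpr h3) h1
  · rfl

lemma zg_swap {Fv : ℕ → ℝ} {k l : ℕ} (h : Fv k ≠ Fv l) : zg Fv l k = -zg Fv k l := by
  rcases h.lt_or_gt with h' | h'
  · simp [zg, h', asymm h']
  · simp [zg, h', asymm h']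

noncomputable def Φrow (N : ℕ) (P : ℕ → ℕ → ℝ) (Fv : ℕ → ℝ) (i : ℕ) : ℤ :=
  ∑ j ∈ Finset.range N, vv N P Fv i j

theorem core (N : ℕ) (hN : 0 < N) (P : ℕ → ℕ → ℝ) (Fv : ℕ → ℝ) (δ κ : ℝ)
    (hδκ : δ ≤ κ)
    (hsym : ∀ k l, P k l = P l k)
    (hdiag : ∀ k, P k k = 1)
    (hstepH : ∀ k l, k ≤ N → l < N → |P k l - P k (l + 1)| < δ)
    (hPN : ∀ k, k ≤ N → P k N = -P k 0)
    (hFN : Fv N = Fv 0)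
    (hκ : ∀ k l, k ≤ N → l ≤ N → |P k l| ≤ κ → Fv k ≠ Fv l)
    (hρH : ∀ k l, k ≤ N → l < N → |P k l| ≤ κ → |P k (l + 1)| ≤ κ →
      (Fv k < Fv l ↔ Fv k < Fv (l + 1)))
    (hρV : ∀ k l, k < N → l ≤ N → |P k l| ≤ κ → |P (k + 1) l| ≤ κ →
      (Fv k < Fv l ↔ Fv (k + 1) < Fv l)) :
    False := by
  -- vertical steps from horizontal ones by symmetry
  have hstepV : ∀ k l, k < N → l ≤ N → |P k l - P (k + 1) l| < δ := by
    intro k l hk hl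
    rw [hsym k l, hsym (k + 1) l]
    exact hstepH l k hl hk
  -- symmetry of sg
  have hsgsymm : ∀ k l, sg N P k l = sg N P l k := by
    intro k l
    simp only [sg, hsym k l]
    by_cases h1 : k < N <;> by_cases h2 : l < N <;> simp [h1, h2]
  -- sg flips at N (second index)
  have hsgN : ∀ k, k ≤ N → sg N P k N = -sg N P k 0 := by
    intro k hk
    have h0 := hPN k hk
    rcases lt_trichotomy (P k 0) 0 with h | h | h
    · have hpos : 0 < P k N := by rw [h0]; linarith
      have h2 : ¬0 < P k 0 := by linarith
      simp only [sg, if_pos hpos, if_neg h2, if_pos h]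
      norm_num
    · have hz1 : ¬0 < P k N := by rw [h0, h]; norm_num
      have hz2 : ¬P k N < 0 := by rw [h0, h]; norm_num
      have hz3 : ¬0 < P k 0 := by rw [h]; norm_num
      have hz4 : ¬P k 0 < 0 := by rw [h]; norm_num
      simp only [sg, if_neg hz1, if_neg hz2, if_neg hz3, if_neg hz4]
      by_cases hkN : k < N <;> simp [hkN, hN, lt_self_iff_false]
    · have hneg : P k N < 0 := by rw [h0]; linarith
      have h2 : ¬0 < P k N := by linarith
      simp only [sg, if_neg h2, if_pos hneg, if_pos h]
  -- sg flips at N (first index)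
  have hsgN' : ∀ l, l ≤ N → sg N P N l = -sg N P 0 l := by
    intro l hl
    rw [hsgsymm N l, hsgN l hl, hsgsymm l 0]
  -- zg is invariant under replacing N by 0
  have hzgN : ∀ k, zg Fv k N = zg Fv k 0 := by
    intro k; unfold zg; rw [hFN]
  have hzgN' : ∀ l, zg Fv N l = zg Fv 0 l := by
    intro l; unfold zg; rw [hFN]
  -- the plaquette identity
  have plaq : ∀ k l, k < N → l < N →
      vv N P Fv (k + 1) l - vv N P Fv k l = ww N P Fv k (l + 1) - ww N P Fv k l := by
    intro k l hk hl
    have hH0 : sg N P k l ≠ sg N P k (l + 1) → zg Fv k l = zg Fv k (l + 1) := by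
      intro h
      obtain ⟨e1, e2⟩ := wall (hstepH k l (le_of_lt hk) hl) h
      exact zg_congr (hρH k l (le_of_lt hk) hl (le_trans (le_of_lt e1) hδκ)
        (le_trans (le_of_lt e2) hδκ))
    have hH1 : sg N P (k + 1) l ≠ sg N P (k + 1) (l + 1) →
        zg Fv (k + 1) l = zg Fv (k + 1) (l + 1) := by
      intro h
      obtain ⟨e1, e2⟩ := wall (hstepH (k + 1) l hk hl) h
      exact zg_congr (hρH (k + 1) l hk hl (le_trans (le_of_lt e1) hδκ)
        (le_trans (le_of_lt e2) hδκ))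
    have hV0 : sg N P k l ≠ sg N P (k + 1) l → zg Fv k l = zg Fv (k + 1) l := by
      intro h
      obtain ⟨e1, e2⟩ := wall (hstepV k l hk (le_of_lt hl)) h
      exact zg_congr (hρV k l hk (le_of_lt hl) (le_trans (le_of_lt e1) hδκ)
        (le_trans (le_of_lt e2) hδκ))
    have hV1 : sg N P k (l + 1) ≠ sg N P (k + 1) (l + 1) →
        zg Fv k (l + 1) = zg Fv (k + 1) (l + 1) := by
      intro h
      obtain ⟨e1, e2⟩ := wall (hstepV k (l + 1) hk hl) h
      exact zg_congr (hρV k (l + 1) hk hl (le_trans (le_of_lt e1) hδκ)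
        (le_trans (le_of_lt e2) hδκ))
    have hP1 : sg N P k l ≠ sg N P k (l + 1) → sg N P (k + 1) l ≠ sg N P (k + 1) (l + 1) →
        zg Fv k l = zg Fv (k + 1) l := by
      intro h h'
      obtain ⟨e1, _⟩ := wall (hstepH k l (le_of_lt hk) hl) h
      obtain ⟨e2, _⟩ := wall (hstepH (k + 1) l hk hl) h'
      exact zg_congr (hρV k l hk (le_of_lt hl) (le_trans (le_of_lt e1) hδκ)
        (le_trans (le_of_lt e2) hδκ))
    have hP2 : sg N P k l ≠ sg N P (k + 1) l → sg N P k (l + 1) ≠ sg N P (k + 1) (l + 1) →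
        zg Fv k l = zg Fv k (l + 1) := by
      intro h h'
      obtain ⟨e1, _⟩ := wall (hstepV k l hk (le_of_lt hl)) h
      obtain ⟨e2, _⟩ := wall (hstepV k (l + 1) hk hl) h'
      exact zg_congr (hρH k l (le_of_lt hk) hl (le_trans (le_of_lt e1) hδκ)
        (le_trans (le_of_lt e2) hδκ))
    rcases sg_cases N P k l with hA | hA <;>
      rcases sg_cases N P k (l + 1) with hB | hB <;>
        rcases sg_cases N P (k + 1) l with hA' | hA' <;>
          rcases sg_cases N P (k + 1) (l + 1) with hB' | hB'
    · simp only [vv, ww, hA, hB, hA', hB']; ring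
    · have e1 := hH1 (by rw [hA', hB']; decide)
      have e2 := hV1 (by rw [hB, hB']; decide)
      simp only [vv, ww, hA, hB, hA', hB']; linarith
    · have e1 := hV0 (by rw [hA, hA']; decide)
      simp only [vv, ww, hA, hB, hA', hB']; linarith
    · have e1 := hP2 (by rw [hA, hA']; decide) (by rw [hB, hB']; decide)
      simp only [vv, ww, hA, hB, hA', hB']; linarith
    · have e1 := hH0 (by rw [hA, hB]; decide)
      simp only [vv, ww, hA, hB, hA', hB']; linarith
    · have e1 := hP1 (by rw [hA, hB]; decide) (by rw [hA', hB']; decide)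
      simp only [vv, ww, hA, hB, hA', hB']; linarith
    · have e1 := hH0 (by rw [hA, hB]; decide)
      have e2 := hV0 (by rw [hA, hA']; decide)
      simp only [vv, ww, hA, hB, hA', hB']; linarith
    · simp only [vv, ww, hA, hB, hA', hB']; ring
    · simp only [vv, ww, hA, hB, hA', hB']; ring
    · have e1 := hH0 (by rw [hA, hB]; decide)
      have e2 := hV0 (by rw [hA, hA']; decide)
      simp only [vv, ww, hA, hB, hA', hB']; linarith
    · have e1 := hP1 (by rw [hA, hB]; decide) (by rw [hA', hB']; decide)
      simp only [vv, ww, hA, hB, hA', hB']; linarith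
    · have e1 := hH0 (by rw [hA, hB]; decide)
      simp only [vv, ww, hA, hB, hA', hB']; linarith
    · have e1 := hP2 (by rw [hA, hA']; decide) (by rw [hB, hB']; decide)
      simp only [vv, ww, hA, hB, hA', hB']; linarith
    · have e1 := hV0 (by rw [hA, hA']; decide)
      simp only [vv, ww, hA, hB, hA', hB']; linarith
    · have e1 := hH1 (by rw [hA', hB']; decide)
      have e2 := hV1 (by rw [hB, hB']; decide)
      simp only [vv, ww, hA, hB, hA', hB']; linarith
    · simp only [vv, ww, hA, hB, hA', hB']; ring
  -- boundary : w i N = -w i 0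
  have hwN : ∀ i, i < N → ww N P Fv i N = -ww N P Fv i 0 := by
    intro i hi
    unfold ww
    rw [hzgN i, hsgN i (le_of_lt hi), hsgN (i + 1) hi]
    ring
  -- step 1 : difference of consecutive row sums
  have hstep1 : ∀ i, i < N → Φrow N P Fv (i + 1) - Φrow N P Fv i = -(2 * ww N P Fv i 0) := by
    intro i hi
    have h1 : Φrow N P Fv (i + 1) - Φrow N P Fv i
        = ∑ j ∈ Finset.range N, (vv N P Fv (i + 1) j - vv N P Fv i j) := by
      unfold Φrow; rw [← Finset.sum_sub_distrib]
    rw [h1, Finset.sum_congr rfl (fun j hj => plaq i j hi (Finset.mem_range.mp hj)),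
      Finset.sum_range_sub (fun j => ww N P Fv i j) N, hwN i hi]
    ring
  -- step 2 : the column sum equals -Φrow 0
  have hΘ : ∑ i ∈ Finset.range N, ww N P Fv i 0 = -Φrow N P Fv 0 := by
    unfold Φrow
    rw [← Finset.sum_neg_distrib]
    refine Finset.sum_congr rfl (fun i hi => ?_)
    have hi' := Finset.mem_range.mp hi
    by_cases h : sg N P i 0 = sg N P (i + 1) 0
    · unfold ww vv
      rw [h, hsgsymm 0 i, hsgsymm 0 (i + 1), h]
      ring
    · obtain ⟨e1, _⟩ := wall (hstepV i 0 hi' (Nat.zero_le N)) h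
      have hne := hκ i 0 (le_of_lt hi') (Nat.zero_le N) (le_trans (le_of_lt e1) hδκ)
      unfold ww vv
      rw [hsgsymm 0 i, hsgsymm 0 (i + 1), zg_swap hne]
      ring
  -- step 3 : Φrow N = -Φrow 0
  have hΦN : Φrow N P Fv N = -Φrow N P Fv 0 := by
    unfold Φrow
    rw [← Finset.sum_neg_distrib]
    refine Finset.sum_congr rfl (fun j hj => ?_)
    have hj' := Finset.mem_range.mp hj
    unfold vv
    rw [hzgN' j, hsgN' j (le_of_lt hj'), hsgN' (j + 1) hj']
    ring
  -- step 4 : Φrow 0 = 0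
  have hΦ0 : Φrow N P Fv 0 = 0 := by
    have htel : Φrow N P Fv N - Φrow N P Fv 0
        = ∑ i ∈ Finset.range N, (Φrow N P Fv (i + 1) - Φrow N P Fv i) :=
      (Finset.sum_range_sub (fun i => Φrow N P Fv i) N).symm
    rw [Finset.sum_congr rfl (fun i hi => hstep1 i (Finset.mem_range.mp hi))] at htel
    rw [Finset.sum_neg_distrib, ← Finset.mul_sum, hΘ, hΦN] at htel
    linarith
  -- step 5 : Φrow 0 ≡ 2 mod 4, contradiction
  have hkey : ∀ j, ((vv N P Fv 0 j : ℤ) : ZMod 4)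
      = ((sg N P 0 j - sg N P 0 (j + 1) : ℤ) : ZMod 4) := by
    intro j
    rcases zg_cases Fv 0 j with hz | hz <;>
      rcases sg_cases N P 0 j with ha | ha <;>
        rcases sg_cases N P 0 (j + 1) with hb | hb <;>
          · simp only [vv, hz, ha, hb]; decide
  have hsum2 : ∑ j ∈ Finset.range N, (sg N P 0 j - sg N P 0 (j + 1)) = 2 := by
    have h1 : ∑ j ∈ Finset.range N, (sg N P 0 (j + 1) - sg N P 0 j)
        = sg N P 0 N - sg N P 0 0 := Finset.sum_range_sub (fun j => sg N P 0 j) N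
    have h2 : ∑ j ∈ Finset.range N, (sg N P 0 j - sg N P 0 (j + 1))
        = -(sg N P 0 N - sg N P 0 0) := by
      rw [← h1, ← Finset.sum_neg_distrib]
      exact Finset.sum_congr rfl (fun j _ => by ring)
    have hs00 : sg N P 0 0 = 1 := by
      unfold sg; rw [if_pos (by rw [hdiag 0]; norm_num)]
    rw [h2, hsgN 0 (Nat.zero_le N), hs00]
    norm_num
  have hfin : ((Φrow N P Fv 0 : ℤ) : ZMod 4) = ((2 : ℤ) : ZMod 4) := by
    unfold Φrow
    push_cast
    rw [Finset.sum_congr rfl (fun j _ => hkey j), ← Int.cast_sum, hsum2]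
    norm_num
  rw [hΦ0] at hfin
  exact absurd hfin (by decide)

/-- δ-chain connectivity of a preconnected set in a metric space. -/
lemma chain_exists {α : Type*} [MetricSpace α] {X : Set α} (hX : IsPreconnected X)
    {a b : α} (ha : a ∈ X) (hb : b ∈ X) {δ : ℝ} (hδ : 0 < δ) :
    ∃ (N : ℕ) (c : ℕ → α), c 0 = a ∧ c N = b ∧ (∀ i, i ≤ N → c i ∈ X) ∧
      (∀ i, i < N → dist (c i) (c (i + 1)) < δ) := by
  classical
  set R : Set α := {x | x ∈ X ∧ ∃ (N : ℕ) (c : ℕ → α), c 0 = a ∧ c N = x ∧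
    (∀ i, i ≤ N → c i ∈ X) ∧ (∀ i, i < N → dist (c i) (c (i + 1)) < δ)} with hR
  have haR : a ∈ R := ⟨ha, 0, fun _ => a, rfl, rfl, fun _ _ => ha, fun i hi => absurd hi (by omega)⟩
  have hext : ∀ y, y ∈ R → ∀ z, z ∈ X → dist y z < δ → z ∈ R := by
    rintro y ⟨hyX, N, c, h0, hNy, hmem, hstep⟩ z hz hd
    refine ⟨hz, N + 1, fun i => if i ≤ N then c i else z, ?_, ?_, ?_, ?_⟩
    · simp [Nat.zero_le, h0]
    · have h2 : ¬(N + 1 ≤ N) := by omega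
      simp [h2]
    · intro i _
      by_cases h : i ≤ N
      · simpa [h] using hmem i h
      · simpa [h] using hz
    · intro i hi
      by_cases h : i < N
      · have h1 : i ≤ N := le_of_lt h
        have h2 : i + 1 ≤ N := h
        simpa [h1, h2] using hstep i h
      · have h1 : i = N := by omega
        subst h1
        have h2 : ¬ (i + 1 ≤ i) := by omega
        simpa [le_refl, h2, hNy] using hd
  by_contra hnb
  have hbR : b ∈ X \ R := ⟨hb, fun h => hnb h.2⟩
  have key := hX (⋃ x ∈ R, Metric.ball x δ) (⋃ x ∈ X \ R, Metric.ball x δ)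
    (isOpen_biUnion fun _ _ => Metric.isOpen_ball)
    (isOpen_biUnion fun _ _ => Metric.isOpen_ball)
    (fun x hx => by
      by_cases h : x ∈ R
      · exact Set.mem_union_left _ (Set.mem_biUnion h (Metric.mem_ball_self hδ))
      · exact Set.mem_union_right _ (Set.mem_biUnion ⟨hx, h⟩ (Metric.mem_ball_self hδ)))
    ⟨a, ha, Set.mem_biUnion haR (Metric.mem_ball_self hδ)⟩
    ⟨b, hb, Set.mem_biUnion hbR (Metric.mem_ball_self hδ)⟩
  obtain ⟨z, hzX, hzU, hzV⟩ := key
  obtain ⟨x, hxR, hzx⟩ := Set.mem_iUnion₂.mp hzU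
  obtain ⟨y, hyXR, hzy⟩ := Set.mem_iUnion₂.mp hzV
  have hzR : z ∈ R := hext x hxR z hzX (by rw [dist_comm]; exact Metric.mem_ball.mp hzx)
  have hyR : y ∈ R := hext z hzR y hyXR.1 (Metric.mem_ball.mp hzy)
  exact hyXR.2 hyR

end YangAux

open scoped RealInnerProductSpace

abbrev ESp := EuclideanSpace ℝ (Fin 3)
abbrev SSp := Metric.sphere (0 : ESp) 1

/-- Yang's Lemma 5.5 (key step): on a nonempty compact connected antipodally invariant
`X ⊆ S²`, a continuous function with `f x = f (-x)` takes equal values at two orthogonal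
points of `X`. -/
theorem orthogonal_pair_equal_values
    (X : Set (Metric.sphere (0 : EuclideanSpace ℝ (Fin 3)) 1))
    (hne : X.Nonempty) (hcomp : IsCompact X) (hconn : IsConnected X) (hinv : -X = X)
    (f : Metric.sphere (0 : EuclideanSpace ℝ (Fin 3)) 1 → ℝ)
    (hf : ContinuousOn f X) (heven : ∀ x ∈ X, f (-x) = f x) :
    ∃ x ∈ X, ∃ y ∈ X,
      inner ℝ (x : EuclideanSpace ℝ (Fin 3)) (y : EuclideanSpace ℝ (Fin 3)) = (0 : ℝ) ∧
      f x = f y := by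
  classical
  by_contra hcon
  push_neg at hcon
  obtain ⟨a, ha⟩ := hne
  -- the inner product pairing is continuous on SSp × SSp
  have hip : Continuous fun z : SSp × SSp => (inner ℝ (z.1 : ESp) (z.2 : ESp) : ℝ) :=
    Continuous.inner (continuous_subtype_val.comp continuous_fst)
      (continuous_subtype_val.comp continuous_snd)
  have hXX : IsCompact (X ×ˢ X : Set (SSp × SSp)) := hcomp.prod hcomp
  -- g z = f z.1 - f z.2 is continuous on X ×ˢ X
  have hg1 : ContinuousOn (fun z : SSp × SSp => f z.1) (X ×ˢ X) := by
    have h := ContinuousOn.comp (s := X ×ˢ X) (t := X) hf continuousOn_fst (fun z hz => hz.1)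
    exact h
  have hg2 : ContinuousOn (fun z : SSp × SSp => f z.2) (X ×ˢ X) := by
    have h := ContinuousOn.comp (s := X ×ˢ X) (t := X) hf continuousOn_snd (fun z hz => hz.2)
    exact h
  have hgon : ContinuousOn (fun z : SSp × SSp => f z.1 - f z.2) (X ×ˢ X) := hg1.sub hg2
  -- the κ property
  obtain ⟨κ, hκpos, hκprop⟩ : ∃ κ : ℝ, 0 < κ ∧ ∀ x y : SSp, x ∈ X → y ∈ X →
      |(inner ℝ (x : ESp) (y : ESp) : ℝ)| ≤ κ → f x ≠ f y := by
    set S' : Set (SSp × SSp) := (X ×ˢ X) ∩ (fun z : SSp × SSp => f z.1 - f z.2) ⁻¹' {0} with hS'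
    have hS'c : IsCompact S' :=
      IsCompact.of_isClosed_subset hXX
        (hgon.preimage_isClosed_of_isClosed hXX.isClosed isClosed_singleton)
        Set.inter_subset_left
    rcases Set.eq_empty_or_nonempty S' with hemp | hne'
    · refine ⟨1, one_pos, fun x y hx hy _ hfeq => ?_⟩
      have : (x, y) ∈ S' := ⟨⟨hx, hy⟩, by simpa using sub_eq_zero.mpr hfeq⟩
      rw [hemp] at this
      exact this
    · obtain ⟨z0, hz0, hmin0⟩ := hS'c.exists_isMinOn hne' hip.abs.continuousOn
      have hmin := isMinOn_iff.mp hmin0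
      have hz0pos : (0 : ℝ) < |(inner ℝ (z0.1 : ESp) (z0.2 : ESp) : ℝ)| := by
        rcases (abs_nonneg (inner ℝ (z0.1 : ESp) (z0.2 : ESp) : ℝ)).lt_or_eq with h | h
        · exact h
        · exfalso
          have hip0 : (inner ℝ (z0.1 : ESp) (z0.2 : ESp) : ℝ) = 0 := abs_eq_zero.mp h.symm
          have hfeq : f z0.1 = f z0.2 := sub_eq_zero.mp (by simpa using hz0.2)
          exact hcon z0.1 hz0.1.1 z0.2 hz0.1.2 hip0 hfeq
      refine ⟨|(inner ℝ (z0.1 : ESp) (z0.2 : ESp) : ℝ)| / 2, by linarith, fun x y hx hy hle hfeq => ?_⟩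
      have hmem : (x, y) ∈ S' := ⟨⟨hx, hy⟩, by simpa using sub_eq_zero.mpr hfeq⟩
      have := hmin (x, y) hmem
      simp only at this
      linarith
  -- the ρ property : uniform local constancy of the sign of f x - f y near small inner products
  obtain ⟨ρ, hρpos, hρprop⟩ : ∃ ρ : ℝ, 0 < ρ ∧ ∀ x y x' y' : SSp, x ∈ X → y ∈ X → x' ∈ X →
      y' ∈ X → |(inner ℝ (x : ESp) (y : ESp) : ℝ)| ≤ κ → |(inner ℝ (x' : ESp) (y' : ESp) : ℝ)| ≤ κ →
      dist x x' < ρ → dist y y' < ρ → (f x < f y ↔ f x' < f y') := by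
    set W : Set (SSp × SSp) := (X ×ˢ X) ∩ {z : SSp × SSp | |(inner ℝ (z.1 : ESp) (z.2 : ESp) : ℝ)| ≤ κ}
      with hW
    have hWc : IsCompact W := hXX.inter_right (isClosed_le hip.abs continuous_const)
    have hgW : ContinuousOn (fun z : SSp × SSp => f z.1 - f z.2) W := hgon.mono Set.inter_subset_left
    set Wp : Set (SSp × SSp) := W ∩ (fun z : SSp × SSp => f z.1 - f z.2) ⁻¹' Set.Ici 0 with hWp
    set Wm : Set (SSp × SSp) := W ∩ (fun z : SSp × SSp => f z.1 - f z.2) ⁻¹' Set.Iic 0 with hWm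
    have hWpc : IsCompact Wp :=
      IsCompact.of_isClosed_subset hWc
        (hgW.preimage_isClosed_of_isClosed hWc.isClosed isClosed_Ici) Set.inter_subset_left
    have hWmc : IsCompact Wm :=
      IsCompact.of_isClosed_subset hWc
        (hgW.preimage_isClosed_of_isClosed hWc.isClosed isClosed_Iic) Set.inter_subset_left
    -- membership helpers
    have hmemW : ∀ x y : SSp, x ∈ X → y ∈ X → |(inner ℝ (x : ESp) (y : ESp) : ℝ)| ≤ κ →
        ((x, y) : SSp × SSp) ∈ W := fun x y hx hy h => ⟨⟨hx, hy⟩, h⟩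
    rcases Set.eq_empty_or_nonempty Wp with hWpe | hWpne
    · refine ⟨1, one_pos, fun x y x' y' hx hy hx' hy' h1 h2 _ _ => ?_⟩
      have k1 : f x < f y := by
        by_contra hlt
        have : ((x, y) : SSp × SSp) ∈ Wp := ⟨hmemW x y hx hy h1, by simp; linarith [not_lt.mp hlt]⟩
        rw [hWpe] at this; exact this
      have k2 : f x' < f y' := by
        by_contra hlt
        have : ((x', y') : SSp × SSp) ∈ Wp :=
          ⟨hmemW x' y' hx' hy' h2, by simp; linarith [not_lt.mp hlt]⟩
        rw [hWpe] at this; exact this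
      exact iff_of_true k1 k2
    rcases Set.eq_empty_or_nonempty Wm with hWme | hWmne
    · refine ⟨1, one_pos, fun x y x' y' hx hy hx' hy' h1 h2 _ _ => ?_⟩
      have k1 : ¬ f x < f y := by
        intro hlt
        have : ((x, y) : SSp × SSp) ∈ Wm := ⟨hmemW x y hx hy h1, by simp; linarith⟩
        rw [hWme] at this; exact this
      have k2 : ¬ f x' < f y' := by
        intro hlt
        have : ((x', y') : SSp × SSp) ∈ Wm := ⟨hmemW x' y' hx' hy' h2, by simp; linarith⟩
        rw [hWme] at this; exact this
      exact iff_of_false k1 k2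
    · obtain ⟨q0, hq0, hqmin0⟩ := (hWpc.prod hWmc).exists_isMinOn (hWpne.prod hWmne)
        continuous_dist.continuousOn
      have hqmin := isMinOn_iff.mp hqmin0
      have hq0p : q0.1 ∈ Wp := hq0.1
      have hq0m : q0.2 ∈ Wm := hq0.2
      have hρ0 : 0 < dist q0.1 q0.2 := by
        rcases eq_or_lt_of_le (dist_nonneg : (0 : ℝ) ≤ dist q0.1 q0.2) with h | h
        · exfalso
          have heq : q0.1 = q0.2 := dist_eq_zero.mp h.symm
          have h1 : (0 : ℝ) ≤ f q0.1.1 - f q0.1.2 := hq0p.2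
          have h2 : f q0.1.1 - f q0.1.2 ≤ 0 := by rw [heq]; exact hq0m.2
          have hfeq : f q0.1.1 = f q0.1.2 := by linarith
          exact hκprop q0.1.1 q0.1.2 hq0p.1.1.1 hq0p.1.1.2 hq0p.1.2 hfeq
        · exact h
      -- the one-sided statement
      have main : ∀ u v u' v' : SSp, u ∈ X → v ∈ X → u' ∈ X → v' ∈ X →
          |(inner ℝ (u : ESp) (v : ESp) : ℝ)| ≤ κ → |(inner ℝ (u' : ESp) (v' : ESp) : ℝ)| ≤ κ →
          dist u u' < dist q0.1 q0.2 → dist v v' < dist q0.1 q0.2 →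
          f u < f v → f u' < f v' := by
        intro u v u' v' hu hv hu' hv' h1 h2 hd1 hd2 hlt
        by_contra hnlt
        have hzm : ((u, v) : SSp × SSp) ∈ Wm := ⟨hmemW u v hu hv h1, by simp; linarith⟩
        have hzp : ((u', v') : SSp × SSp) ∈ Wp :=
          ⟨hmemW u' v' hu' hv' h2, by simp; linarith [not_lt.mp hnlt]⟩
        have hle := hqmin ((u', v'), (u, v)) ⟨hzp, hzm⟩
        simp only at hle
        have : dist ((u', v') : SSp × SSp) ((u, v) : SSp × SSp) < dist q0.1 q0.2 := by
          rw [Prod.dist_eq]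
          exact max_lt (by rw [dist_comm]; exact hd1) (by rw [dist_comm]; exact hd2)
        linarith
      refine ⟨dist q0.1 q0.2, hρ0, fun x y x' y' hx hy hx' hy' h1 h2 hd1 hd2 => ?_⟩
      constructor
      · exact main x y x' y' hx hy hx' hy' h1 h2 hd1 hd2
      · exact main x' y' x y hx' hy' hx hy h2 h1 (by rw [dist_comm]; exact hd1)
          (by rw [dist_comm]; exact hd2)
  -- choose δ and a δ-chain from a to -a
  set δ := min κ ρ with hδ
  have hδpos : 0 < δ := lt_min hκpos hρpos
  have hδκ : δ ≤ κ := min_le_left _ _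
  have hδρ : δ ≤ ρ := min_le_right _ _
  have hbX : (-a : SSp) ∈ X := by
    rw [← hinv, Set.mem_neg, neg_neg]
    exact ha
  obtain ⟨N, c, hc0, hcN, hcmem, hcstep⟩ := YangAux.chain_exists hconn.isPreconnected ha hbX hδpos
  have hN : 0 < N := by
    rcases Nat.eq_zero_or_pos N with h | h
    · exfalso
      subst h
      have haa : a = -a := hc0.symm.trans hcN
      have haa' : (a : ESp) = -(a : ESp) := by
        have h := congrArg (Subtype.val) haa
        rwa [coe_neg_sphere] at h
      have h2 : (a : ESp) + (a : ESp) = 0 := by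
        nth_rewrite 2 [haa']
        exact add_neg_cancel _
      have h3 : (2 : ℝ) • (a : ESp) = 0 := by rw [two_smul]; exact h2
      have h0 : (a : ESp) = 0 := by
        rcases smul_eq_zero.mp h3 with h | h
        · norm_num at h
        · exact h
      have h1 : ‖(a : ESp)‖ = 1 := norm_eq_of_mem_sphere a
      rw [h0, norm_zero] at h1
      norm_num at h1
    · exact h
  -- instantiate the combinatorial core lemma
  refine YangAux.core N hN (fun k l => (inner ℝ ((c k : ESp)) ((c l : ESp)) : ℝ))
    (fun k => f (c k)) δ κ hδκ
    (fun k l => real_inner_comm _ _)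
    (fun k => by
      show (inner ℝ ((c k : ESp)) ((c k : ESp)) : ℝ) = 1
      rw [real_inner_self_eq_norm_mul_norm, norm_eq_of_mem_sphere (c k)]; norm_num)
    (fun k l hk hl => ?_) (fun k hk => ?_) ?_ (fun k l hk hl h => ?_)
    (fun k l hk hl h1 h2 => ?_) (fun k l hk hl h1 h2 => ?_)
  · -- step bound
    show |(inner ℝ ((c k : ESp)) ((c l : ESp)) : ℝ) - (inner ℝ ((c k : ESp)) ((c (l + 1) : ESp)) : ℝ)| < δ
    have h1 : (inner ℝ ((c k : ESp)) ((c l : ESp)) : ℝ) - inner ℝ ((c k : ESp)) ((c (l + 1) : ESp))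
        = inner ℝ ((c k : ESp)) ((c l : ESp) - (c (l + 1) : ESp)) := (inner_sub_right _ _ _).symm
    rw [h1]
    calc |(inner ℝ ((c k : ESp)) ((c l : ESp) - (c (l + 1) : ESp)) : ℝ)|
        ≤ ‖(c k : ESp)‖ * ‖(c l : ESp) - (c (l + 1) : ESp)‖ := abs_real_inner_le_norm _ _
      _ = dist (c l) (c (l + 1)) := by
          rw [norm_eq_of_mem_sphere (c k), one_mul, Subtype.dist_eq, dist_eq_norm]
      _ < δ := hcstep l hl
  · -- P k N = - P k 0
    show (inner ℝ ((c k : ESp)) ((c N : ESp)) : ℝ) = -(inner ℝ ((c k : ESp)) ((c 0 : ESp)) : ℝ)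
    rw [hcN, hc0, coe_neg_sphere, inner_neg_right]
  · -- F N = F 0
    show f (c N) = f (c 0)
    rw [hcN, hc0]
    exact heven a ha
  · -- κ property
    exact hκprop (c k) (c l) (hcmem k hk) (hcmem l hl) h
  · -- ρ property, horizontal
    exact hρprop (c k) (c l) (c k) (c (l + 1)) (hcmem k hk) (hcmem l (le_of_lt hl))
      (hcmem k hk) (hcmem (l + 1) hl) h1 h2 (by rw [dist_self]; exact hρpos)
      (lt_of_lt_of_le (hcstep l hl) hδρ)
  · -- ρ property, vertical
    exact hρprop (c k) (c l) (c (k + 1)) (c l) (hcmem k (le_of_lt hk)) (hcmem l hl)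
      (hcmem (k + 1) hk) (hcmem l hl) h1 h2 (lt_of_lt_of_le (hcstep k hk) hδρ)
      (by rw [dist_self]; exact hρpos)
end
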